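/- arXiv:2206.05805 — 7 statements merged into one kernel-verified Lean document; each statement's English description precedes it below -/
import Mathlib

section
/- Let q be a prime power and let l, r, u be positive integers. Let H be a matrix over F_q with l+u rows and l(r+1) columns such that for each 1 ≤ i ≤ l, row i has entry 1 in columns (i−1)(r+1)+1, …, i(r+1) and entry 0 in all other columns (the l 'locality-rows' have pairwise disjoint supports of size r+1 covering all columns); the remaining u rows are arbitrary. If every set of at most 4 distinct columns of H is linearly independent, then l·C(r+1,2) ≤ (q^u − 1)/(q − 1), where C(n,k) denotes the binomial coefficient. -/
noncomputable def wt {F : Type*} [Zero F] {ι : Type*} (x : ι → F) : ℕ :=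
  {i | x i ≠ 0}.ncard

def dualCode {F : Type*} [Field F] {n : ℕ} (C : Submodule F (Fin n → F)) :
    Submodule F (Fin n → F) where
  carrier := {y | ∀ x ∈ C, ∑ i, x i * y i = 0}
  add_mem' := by
    intro a b ha hb
    simp only [Set.mem_setOf_eq] at *
    intro z hz
    simp [Pi.add_apply, mul_add, Finset.sum_add_distrib, ha z hz, hb z hz]
  zero_mem' := by
    intro z hz
    simp
  smul_mem' := by
    intro c a ha
    simp only [Set.mem_setOf_eq] at *
    intro z hz
    have h : ∀ i, z i * (c • a) i = c * (z i * a i) := by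
      intro i; simp [smul_eq_mul]; ring
    simp only [h, ← Finset.mul_sum, ha z hz, mul_zero]

def isMinDist {F : Type*} [Field F] {ι : Type*} (C : Submodule F (ι → F)) (d : ℕ) : Prop :=
  (∃ x ∈ C, x ≠ 0 ∧ wt x = d) ∧ ∀ x ∈ C, x ≠ 0 → d ≤ wt x

def hasLocality {F : Type*} [Field F] {n : ℕ} (C : Submodule F (Fin n → F)) (r : ℕ) : Prop :=
  ∀ i : Fin n, ∃ h ∈ dualCode C, h i ≠ 0 ∧ wt h ≤ r + 1

abbrev GF4 := GaloisField 2 2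

def ceilDiv (a b : ℕ) : ℕ := (a + b - 1) / b

theorem key_lemma (l r u : ℕ)
    (F : Type) [Field F] [Fintype F]
    (H : Matrix (Fin (l + u)) (Fin (l * (r + 1))) F)
    (hind : ∀ s : Finset (Fin (l * (r + 1))), s.card ≤ 4 →
      LinearIndependent F (fun j : {x // x ∈ s} => (fun i => H i j.1)))
    (j1 j2 j3 j4 : Fin (l * (r + 1)))
    (hlt : j1 < j2) (hlt' : j3 < j4) (a b : F)
    (heq : a • (fun i => H i j1) - a • (fun i => H i j2)
         - b • (fun i => H i j3) + b • (fun i => H i j4) = (0 : Fin (l+u) → F)) :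
    (j1 = j3 ∧ j2 = j4 ∧ a = b) ∨ (a = 0 ∧ b = 0) := by
  classical
  have h12 : j1 ≠ j2 := ne_of_lt hlt
  have h34 : j3 ≠ j4 := ne_of_lt hlt'
  set s : Finset (Fin (l * (r+1))) := {j1, j2, j3, j4} with hs
  have hmem1 : j1 ∈ s := by simp [hs]
  have hmem2 : j2 ∈ s := by simp [hs]
  have hmem3 : j3 ∈ s := by simp [hs]
  have hmem4 : j4 ∈ s := by simp [hs]
  have hcard : s.card ≤ 4 := by
    refine le_trans (Finset.card_insert_le _ _) ?_
    have h2 := Finset.card_insert_le j2 ({j3, j4} : Finset _)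
    have h3 := Finset.card_insert_le j3 ({j4} : Finset _)
    have h4 : ({j4} : Finset _).card = 1 := Finset.card_singleton j4
    omega
  have hLI := hind s hcard
  rw [Fintype.linearIndependent_iff] at hLI
  set w : Fin (l*(r+1)) → F := fun j =>
    (if j = j1 then a else 0) - (if j = j2 then a else 0)
    - (if j = j3 then b else 0) + (if j = j4 then b else 0) with hw
  have hsum : (∑ j : {x // x ∈ s}, w j.1 • (fun i => H i j.1)) = (0 : Fin (l+u) → F) := by
    have e1 : (∑ j : {x // x ∈ s}, w j.1 • (fun i => H i j.1))
        = ∑ j ∈ s, w j • ((fun i => H i j) : Fin (l+u) → F) := by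
      exact Finset.sum_coe_sort s (fun j => w j • ((fun i => H i j) : Fin (l+u) → F))
    have e2 : (∑ j ∈ s, w j • ((fun i => H i j) : Fin (l+u) → F))
        = ∑ j : Fin (l*(r+1)), w j • ((fun i => H i j) : Fin (l+u) → F) := by
      refine Finset.sum_subset (Finset.subset_univ s) ?_
      intro j _ hj
      simp only [hs, Finset.mem_insert, Finset.mem_singleton, not_or] at hj
      have hwj : w j = 0 := by
        simp [hw, hj.1, hj.2.1, hj.2.2.1, hj.2.2.2]
      rw [hwj, zero_smul]
    have e3 : (∑ j : Fin (l*(r+1)), w j • ((fun i => H i j) : Fin (l+u) → F))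
        = a • ((fun i => H i j1) : Fin (l+u) → F) - a • (fun i => H i j2)
          - b • (fun i => H i j3) + b • (fun i => H i j4) := by
      simp only [hw, sub_smul, add_smul]
      rw [Finset.sum_add_distrib, Finset.sum_sub_distrib, Finset.sum_sub_distrib]
      congr 1
      · congr 1
        · congr 1
          · simp [ite_smul]
          · simp [ite_smul]
        · simp [ite_smul]
      · simp [ite_smul]
    rw [e1, e2, e3, heq]
  have hz : ∀ j ∈ s, w j = 0 := by
    intro j hj
    exact hLI (fun j => w j.1) hsum ⟨j, hj⟩
  by_cases hA : j1 = j3 ∧ j2 = j4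
  · left
    refine ⟨hA.1, hA.2, ?_⟩
    have h14 : j1 ≠ j4 := by
      intro h; rw [hA.1] at h; exact h34 h
    have hthis := hz j1 hmem1
    simp only [hw, if_pos rfl, if_neg h12, if_pos hA.1, if_neg h14] at hthis
    have h' : a - b = 0 := by simpa using hthis
    exact sub_eq_zero.mp h'
  · right
    push_neg at hA
    have hv := Fin.lt_def.mp hlt
    have hv' := Fin.lt_def.mp hlt'
    have ha : a = 0 := by
      by_cases e13 : j1 = j3
      · have e24 : j2 ≠ j4 := hA e13
        have e23 : j2 ≠ j3 := fun h => h12 (e13.trans h.symm)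
        have hthis := hz j2 hmem2
        simp only [hw, if_neg (Ne.symm h12), if_pos rfl, if_neg e23, if_neg e24] at hthis
        simpa using hthis
      · by_cases e14 : j1 = j4
        · have e24 : j2 ≠ j4 := fun h => h12 (e14.trans h.symm)
          have e23 : j2 ≠ j3 := by
            intro h
            have hv1 := congrArg Fin.val e14
            have hv2 := congrArg Fin.val h
            omega
          have hthis := hz j2 hmem2
          simp only [hw, if_neg (Ne.symm h12), if_pos rfl, if_neg e23, if_neg e24] at hthis
          simpa using hthis
        · have hthis := hz j1 hmem1
          simp only [hw, if_pos rfl, if_neg h12, if_neg e13, if_neg e14] at hthis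
          simpa using hthis
    refine ⟨ha, ?_⟩
    by_cases e13 : j1 = j3
    · have e41 : j4 ≠ j1 := by
        intro h
        have hv1 := congrArg Fin.val e13
        have hv2 := congrArg Fin.val h
        omega
      have e42 : j4 ≠ j2 := fun h => hA e13 h.symm
      have hthis := hz j4 hmem4
      simp only [hw, if_neg e41, if_neg e42, if_neg (Ne.symm h34), if_pos rfl] at hthis
      simpa using hthis
    · by_cases e23 : j2 = j3
      · have hv2 := congrArg Fin.val e23
        have e41 : j4 ≠ j1 := by
          intro h; have := congrArg Fin.val h; omega
        have e42 : j4 ≠ j2 := by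
          intro h; have := congrArg Fin.val h; omega
        have hthis := hz j4 hmem4
        simp only [hw, if_neg e41, if_neg e42, if_neg (Ne.symm h34), if_pos rfl] at hthis
        simpa using hthis
      · have hthis := hz j3 hmem3
        simp only [hw, if_neg (Ne.symm e13), if_neg (Ne.symm e23), if_pos rfl, if_neg h34] at hthis
        simpa using hthis

/-- finite-geometry bound for matrices whose first `l` rows are
disjoint locality-rows of weight `r+1`, assuming any ≤4 columns are independent. -/
theorem stmt_0 (q l r u : ℕ) (hq : IsPrimePow q)
    (hl : 1 ≤ l) (hr : 1 ≤ r) (hu : 1 ≤ u)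
    (F : Type) [Field F] [Fintype F] (hF : Fintype.card F = q)
    (H : Matrix (Fin (l + u)) (Fin (l * (r + 1))) F)
    (hloc : ∀ i : Fin (l + u), i.val < l →
      ∀ j : Fin (l * (r + 1)), H i j = if j.val / (r + 1) = i.val then 1 else 0)
    (hind : ∀ s : Finset (Fin (l * (r + 1))), s.card ≤ 4 →
      LinearIndependent F (fun j : {x // x ∈ s} => (fun i => H i j.1))) :
    l * Nat.choose (r + 1) 2 ≤ (q ^ u - 1) / (q - 1) := by
  classical
  have hq1 : 1 < q := hq.one_lt
  have hrpos : 0 < r + 1 := Nat.succ_pos r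
  let em : Fin u → Fin (l + u) := fun k => ⟨l + k.val, by omega⟩
  have hidx : ∀ (i : Fin l) (aa : Fin (r+1)), i.val * (r+1) + aa.val < l * (r+1) := by
    intro i aa
    have hi : i.val + 1 ≤ l := i.isLt
    have ha := aa.isLt
    have h1 : (i.val+1) * (r+1) ≤ l * (r+1) := Nat.mul_le_mul_right _ hi
    have h2 : (i.val+1) * (r+1) = i.val * (r+1) + (r+1) := Nat.succ_mul _ _
    omega
  let idx : Fin l → Fin (r+1) → Fin (l*(r+1)) := fun i aa => ⟨i.val*(r+1)+aa.val, hidx i aa⟩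
  have hdiv : ∀ (i : Fin l) (aa : Fin (r+1)), (idx i aa).val / (r+1) = i.val := by
    intro i aa
    show (i.val * (r+1) + aa.val) / (r+1) = i.val
    rw [Nat.mul_comm, Nat.mul_add_div hrpos, Nat.div_eq_of_lt aa.isLt, Nat.add_zero]
  have hsplit : ∀ j1 j2 j3 j4 : Fin (l*(r+1)),
      j1.val/(r+1) = j2.val/(r+1) → j3.val/(r+1) = j4.val/(r+1) →
      ∀ a b : F,
      (∀ k : Fin u, a * (H (em k) j1 - H (em k) j2) = b * (H (em k) j3 - H (em k) j4)) →
      a • (fun i => H i j1) - a • (fun i => H i j2)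
        - b • (fun i => H i j3) + b • (fun i => H i j4) = (0 : Fin (l+u) → F) := by
    intro j1 j2 j3 j4 hg hg' a b hbot
    funext i
    simp only [Pi.add_apply, Pi.sub_apply, Pi.smul_apply, smul_eq_mul, Pi.zero_apply]
    by_cases hi : i.val < l
    · rw [hloc i hi j1, hloc i hi j2, hloc i hi j3, hloc i hi j4, hg, hg']
      ring
    · have hk : i.val - l < u := by have := i.isLt; omega
      have hik : em ⟨i.val - l, hk⟩ = i := by
        apply Fin.ext
        show l + (i.val - l) = i.val
        omega
      have := hbot ⟨i.val - l, hk⟩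
      rw [hik] at this
      linear_combination this
  -- the 2-subsets
  have hne : ∀ s : {s : Finset (Fin (r+1)) // s.card = 2}, s.1.Nonempty :=
    fun s => Finset.card_pos.mp (by rw [s.2]; norm_num)
  let lo : {s : Finset (Fin (r+1)) // s.card = 2} → Fin (r+1) := fun s => s.1.min' (hne s)
  let hi : {s : Finset (Fin (r+1)) // s.card = 2} → Fin (r+1) := fun s => s.1.max' (hne s)
  have hlohi : ∀ s, lo s < hi s :=
    fun s => Finset.min'_lt_max'_of_card _ (by rw [s.2]; norm_num)
  have hrec : ∀ s, ({lo s, hi s} : Finset (Fin (r+1))) = s.1 := by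
    intro s
    apply Finset.eq_of_subset_of_card_le
    · intro x hx
      rcases Finset.mem_insert.mp hx with h | h
      · rw [h]; exact Finset.min'_mem _ _
      · rw [Finset.mem_singleton] at h; rw [h]; exact Finset.max'_mem _ _
    · rw [s.2, Finset.card_pair (ne_of_lt (hlohi s))]
  have hltidx : ∀ (i : Fin l) (s : {s : Finset (Fin (r+1)) // s.card = 2}),
      idx i (lo s) < idx i (hi s) := by
    intro i s
    have := Fin.lt_def.mp (hlohi s)
    exact Fin.mk_lt_mk.mpr (by omega)
  have hgrp : ∀ (i : Fin l) (s : {s : Finset (Fin (r+1)) // s.card = 2}),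
      (idx i (lo s)).val / (r+1) = (idx i (hi s)).val / (r+1) := by
    intro i s; rw [hdiv, hdiv]
  -- the injection
  let Φ : ((Fin l × {s : Finset (Fin (r+1)) // s.card = 2}) × Fˣ) → {v : Fin u → F // v ≠ 0} :=
    fun p => ⟨fun k => (p.2 : F) * (H (em k) (idx p.1.1 (lo p.1.2)) - H (em k) (idx p.1.1 (hi p.1.2))), by
      intro h0
      have hbot : ∀ k : Fin u, (p.2 : F) * (H (em k) (idx p.1.1 (lo p.1.2)) - H (em k) (idx p.1.1 (hi p.1.2)))
          = (0 : F) * (H (em k) (idx p.1.1 (lo p.1.2)) - H (em k) (idx p.1.1 (hi p.1.2))) := by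
        intro k
        rw [zero_mul]
        exact congrFun h0 k
      have hfull := hsplit _ _ _ _ (hgrp p.1.1 p.1.2) (hgrp p.1.1 p.1.2) _ _ hbot
      rcases key_lemma l r u F H hind _ _ _ _ (hltidx p.1.1 p.1.2) (hltidx p.1.1 p.1.2)
        _ _ hfull with h | h
      · exact Units.ne_zero p.2 h.2.2
      · exact Units.ne_zero p.2 h.1⟩
  have hinj : Function.Injective Φ := by
    intro x y hxy
    have hfun := congrArg Subtype.val hxy
    have hbot : ∀ k : Fin u,
        (x.2 : F) * (H (em k) (idx x.1.1 (lo x.1.2)) - H (em k) (idx x.1.1 (hi x.1.2)))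
        = (y.2 : F) * (H (em k) (idx y.1.1 (lo y.1.2)) - H (em k) (idx y.1.1 (hi y.1.2))) :=
      fun k => congrFun hfun k
    have hfull := hsplit _ _ _ _ (hgrp x.1.1 x.1.2) (hgrp y.1.1 y.1.2) _ _ hbot
    rcases key_lemma l r u F H hind _ _ _ _ (hltidx x.1.1 x.1.2) (hltidx y.1.1 y.1.2)
      _ _ hfull with h | h
    · obtain ⟨h13, h24, hab⟩ := h
      have hv13 := congrArg Fin.val h13
      have hv24 := congrArg Fin.val h24
      have hieq : x.1.1 = y.1.1 := by
        apply Fin.ext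
        rw [← hdiv x.1.1 (lo x.1.2), ← hdiv y.1.1 (lo y.1.2), h13]
      have hveq : x.1.1.val = y.1.1.val := congrArg Fin.val hieq
      have hlo : lo x.1.2 = lo y.1.2 := by
        apply Fin.ext
        have e : x.1.1.val * (r+1) + (lo x.1.2).val
            = y.1.1.val * (r+1) + (lo y.1.2).val := hv13
        rw [← hveq] at e
        exact Nat.add_left_cancel e
      have hhi : hi x.1.2 = hi y.1.2 := by
        apply Fin.ext
        have e : x.1.1.val * (r+1) + (hi x.1.2).val
            = y.1.1.val * (r+1) + (hi y.1.2).val := hv24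
        rw [← hveq] at e
        exact Nat.add_left_cancel e
      have hseq : x.1.2 = y.1.2 := by
        apply Subtype.ext
        rw [← hrec x.1.2, ← hrec y.1.2, hlo, hhi]
      have hu : x.2 = y.2 := Units.ext hab
      exact Prod.ext (Prod.ext hieq hseq) hu
    · exact absurd h.1 (Units.ne_zero x.2)
  have hcount := Fintype.card_le_of_injective Φ hinj
  have hS2 : Fintype.card {s : Finset (Fin (r+1)) // s.card = 2} = (r+1).choose 2 := by
    rw [Fintype.card_finset_len, Fintype.card_fin]
  have hsub : Fintype.card {v : Fin u → F // v ≠ 0} = q ^ u - 1 := by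
    have h1 : Fintype.card {v : Fin u → F // v = 0} = 1 := Fintype.card_subtype_eq 0
    have h2 := Fintype.card_subtype_compl (fun v : Fin u → F => v = 0)
    rw [h1, Fintype.card_fun, hF, Fintype.card_fin] at h2
    exact h2
  rw [Fintype.card_prod, Fintype.card_prod, Fintype.card_fin, Fintype.card_units, hF,
    hS2, hsub] at hcount
  rw [Nat.le_div_iff_mul_le (by omega : 0 < q - 1)]
  exact hcount
end

section
/- Let q be a prime power and let l, r, u be positive integers. Let H be a matrix over F_q with l+u rows and l(r+1) columns such that for each 1 ≤ i ≤ l, row i has entry 1 in columns (i−1)(r+1)+1, …, i(r+1) and entry 0 in all other columns; the remaining u rows are arbitrary. If every set of at most 6 distinct columns of H is linearly independent, then l·(q−2)·C(r+1,3) ≤ (q^u − 1)/(q − 1). -/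
section helpers
variable {F : Type} [Field F]

lemma sum_single_mul {n : ℕ} (p : Fin n) (x : F) (g : Fin n → F) :
    ∑ j, (Pi.single p x : Fin n → F) j * g j = x * g p := by
  rw [Finset.sum_eq_single p]
  · simp
  · intro b _ hb; simp [Pi.single_eq_of_ne hb]
  · simp

noncomputable def trip3 {α : Type*} [DecidableEq α] (s : Finset α) (hs : s.card = 3) : α × α × α :=
  ⟨(Finset.card_eq_three.mp hs).choose,
   (Finset.card_eq_three.mp hs).choose_spec.choose,
   (Finset.card_eq_three.mp hs).choose_spec.choose_spec.choose⟩

lemma trip3_spec {α : Type*} [DecidableEq α] (s : Finset α) (hs : s.card = 3) :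
    (trip3 s hs).1 ≠ (trip3 s hs).2.1 ∧ (trip3 s hs).1 ≠ (trip3 s hs).2.2 ∧
      (trip3 s hs).2.1 ≠ (trip3 s hs).2.2 ∧
      s = {(trip3 s hs).1, (trip3 s hs).2.1, (trip3 s hs).2.2} :=
  (Finset.card_eq_three.mp hs).choose_spec.choose_spec.choose_spec

def colIdx {l r : ℕ} (i : Fin l) (t : Fin (r + 1)) : Fin (l * (r + 1)) :=
  ⟨i.1 * (r + 1) + t.1, by
    calc i.1 * (r + 1) + t.1 < i.1 * (r + 1) + (r + 1) := by omega
    _ = (i.1 + 1) * (r + 1) := by ring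
    _ ≤ l * (r + 1) := Nat.mul_le_mul_right _ i.2⟩

lemma colIdx_div {l r : ℕ} (i : Fin l) (t : Fin (r + 1)) :
    (colIdx i t).1 / (r + 1) = i.1 := by
  show (i.1 * (r + 1) + t.1) / (r + 1) = i.1
  rw [add_comm, Nat.add_mul_div_right _ _ (by omega : 0 < r + 1),
    Nat.div_eq_of_lt t.2, zero_add]

lemma colIdx_inj {l r : ℕ} {i i' : Fin l} {t t' : Fin (r + 1)}
    (h : colIdx i t = colIdx i' t') : i = i' ∧ t = t' := by
  have hv : i.1 * (r + 1) + t.1 = i'.1 * (r + 1) + t'.1 := congrArg Fin.val h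
  have hd : i.1 = i'.1 := by
    have := colIdx_div i t
    rw [h, colIdx_div] at this
    omega
  refine ⟨Fin.ext hd, Fin.ext ?_⟩
  rw [hd] at hv; omega

noncomputable def coefF {l r : ℕ} (i : Fin l) (a b c : Fin (r + 1)) (lam : F) :
    Fin (l * (r + 1)) → F := fun j =>
  (Pi.single (colIdx i a) (1 : F) : Fin (l * (r + 1)) → F) j +
    (Pi.single (colIdx i b) (-lam) : Fin (l * (r + 1)) → F) j +
    (Pi.single (colIdx i c) (lam - 1) : Fin (l * (r + 1)) → F) j

lemma coefF_sum {l r : ℕ} (i : Fin l) (a b c : Fin (r + 1)) (lam : F)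
    (g : Fin (l * (r + 1)) → F) :
    ∑ j, coefF i a b c lam j * g j =
      g (colIdx i a) - lam * g (colIdx i b) + (lam - 1) * g (colIdx i c) := by
  simp only [coefF, add_mul, Finset.sum_add_distrib, sum_single_mul]
  ring

lemma coefF_support {l r : ℕ} {i : Fin l} {a b c : Fin (r + 1)} {lam : F}
    {j : Fin (l * (r + 1))} (h : coefF i a b c lam j ≠ 0) :
    j = colIdx i a ∨ j = colIdx i b ∨ j = colIdx i c := by
  by_contra hcon
  push_neg at hcon
  apply h
  simp [coefF, Pi.single_eq_of_ne hcon.1, Pi.single_eq_of_ne hcon.2.1,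
    Pi.single_eq_of_ne hcon.2.2]

lemma coefF_apply_a {l r : ℕ} {i : Fin l} {a b c : Fin (r + 1)} {lam : F}
    (hab : a ≠ b) (hac : a ≠ c) :
    coefF i a b c lam (colIdx i a) = 1 := by
  have h1 : colIdx i a ≠ colIdx i b := fun h => hab (colIdx_inj h).2
  have h2 : colIdx i a ≠ colIdx i c := fun h => hac (colIdx_inj h).2
  simp [coefF, Pi.single_eq_of_ne h1, Pi.single_eq_of_ne h2]

lemma coefF_apply_b {l r : ℕ} {i : Fin l} {a b c : Fin (r + 1)} {lam : F}
    (hab : a ≠ b) (hbc : b ≠ c) :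
    coefF i a b c lam (colIdx i b) = -lam := by
  have h1 : colIdx i b ≠ colIdx i a := fun h => hab (colIdx_inj h).2.symm
  have h2 : colIdx i b ≠ colIdx i c := fun h => hbc (colIdx_inj h).2
  simp [coefF, Pi.single_eq_of_ne h1, Pi.single_eq_of_ne h2]

lemma coefF_apply_c {l r : ℕ} {i : Fin l} {a b c : Fin (r + 1)} {lam : F}
    (hac : a ≠ c) (hbc : b ≠ c) :
    coefF i a b c lam (colIdx i c) = lam - 1 := by
  have h1 : colIdx i c ≠ colIdx i a := fun h => hac (colIdx_inj h).2.symm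
  have h2 : colIdx i c ≠ colIdx i b := fun h => hbc (colIdx_inj h).2.symm
  simp [coefF, Pi.single_eq_of_ne h1, Pi.single_eq_of_ne h2]

noncomputable def vvec {l r u : ℕ} (H : Matrix (Fin (l + u)) (Fin (l * (r + 1))) F)
    (i : Fin l) (a b c : Fin (r + 1)) (lam : F) : Fin u → F := fun k =>
  H ⟨l + k.1, by omega⟩ (colIdx i a) - lam * H ⟨l + k.1, by omega⟩ (colIdx i b) +
    (lam - 1) * H ⟨l + k.1, by omega⟩ (colIdx i c)

end helpers

section main
variable {F : Type} [Field F] {l r u : ℕ}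

lemma card_le_three {α : Type*} [DecidableEq α] (x1 x2 x3 : α) :
    ({x1, x2, x3} : Finset α).card ≤ 3 := by
  apply (Finset.card_insert_le _ _).trans
  apply Nat.succ_le_succ
  apply (Finset.card_insert_le _ _).trans
  apply Nat.succ_le_succ
  simp

lemma card_le_six {α : Type*} [DecidableEq α] (s t : Finset α)
    (hs : s.card ≤ 3) (ht : t.card ≤ 3) : (s ∪ t).card ≤ 6 := by
  have := Finset.card_union_le s t
  omega

variable (H : Matrix (Fin (l + u)) (Fin (l * (r + 1))) F)

lemma key (hind : ∀ s : Finset (Fin (l * (r + 1))), s.card ≤ 6 →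
      LinearIndependent F (fun j : {x // x ∈ s} => (fun i => H i j.1)))
    (s : Finset (Fin (l * (r + 1)))) (hs : s.card ≤ 6)
    (c : Fin (l * (r + 1)) → F) (hsupp : ∀ j, c j ≠ 0 → j ∈ s)
    (hsum : ∀ i, ∑ j, c j * H i j = 0) : ∀ j, c j = 0 := by
  intro j
  by_cases hj : j ∈ s
  · refine (Fintype.linearIndependent_iff.mp (hind s hs)) (fun j => c j.1) ?_ ⟨j, hj⟩
    funext i
    rw [Finset.sum_apply]
    simp only [Pi.smul_apply, smul_eq_mul]
    rw [Finset.sum_coe_sort s (fun jj => c jj * H i jj)]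
    rw [Finset.sum_subset (Finset.subset_univ s) (fun x _ hx => by
      have : c x = 0 := by by_contra hne; exact hx (hsupp x hne)
      simp [this])]
    · exact hsum i
  · by_contra h; exact hj (hsupp j h)

lemma htop (hloc : ∀ i : Fin (l + u), i.val < l →
      ∀ j : Fin (l * (r + 1)), H i j = if j.val / (r + 1) = i.val then 1 else 0)
    (k : Fin (l + u)) (hk : k.1 < l) (i : Fin l) (t : Fin (r + 1)) :
    H k (colIdx i t) = if i.1 = k.1 then 1 else 0 := by
  rw [hloc k hk, colIdx_div]

lemma toprow_sum (hloc : ∀ i : Fin (l + u), i.val < l →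
      ∀ j : Fin (l * (r + 1)), H i j = if j.val / (r + 1) = i.val then 1 else 0)
    (i : Fin l) (a b c : Fin (r + 1)) (lam : F) (k : Fin (l + u)) (hk : k.1 < l) :
    ∑ j, coefF i a b c lam j * H k j = 0 := by
  rw [coefF_sum, htop H hloc k hk, htop H hloc k hk, htop H hloc k hk]
  split <;> ring

lemma coef_eq (hloc : ∀ i : Fin (l + u), i.val < l →
      ∀ j : Fin (l * (r + 1)), H i j = if j.val / (r + 1) = i.val then 1 else 0)
    (hind : ∀ s : Finset (Fin (l * (r + 1))), s.card ≤ 6 →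
      LinearIndependent F (fun j : {x // x ∈ s} => (fun i => H i j.1)))
    (i i' : Fin l) (a b c a' b' c' : Fin (r + 1)) (lam lam' ν : F)
    (h : vvec H i a b c lam = ν • vvec H i' a' b' c' lam') :
    ∀ j, coefF i a b c lam j = ν * coefF i' a' b' c' lam' j := by
  set s : Finset (Fin (l * (r + 1))) :=
    {colIdx i a, colIdx i b, colIdx i c} ∪ {colIdx i' a', colIdx i' b', colIdx i' c'} with hsdef
  have hz := key H hind s (card_le_six _ _ (card_le_three _ _ _) (card_le_three _ _ _))
    (fun j => coefF i a b c lam j - ν * coefF i' a' b' c' lam' j) ?_ ?_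
  · intro j
    have := hz j
    linear_combination this
  · intro j hj
    by_contra hnot
    simp only [hsdef, Finset.mem_union, Finset.mem_insert, Finset.mem_singleton] at hnot
    push_neg at hnot
    have e1 : coefF i a b c lam j = 0 := by
      by_contra hne
      rcases coefF_support hne with h1 | h1 | h1 <;> tauto
    have e2 : coefF i' a' b' c' lam' j = 0 := by
      by_contra hne
      rcases coefF_support hne with h1 | h1 | h1 <;> tauto
    exact hj (by simp [e1, e2])
  · intro row
    simp only [sub_mul, Finset.sum_sub_distrib, mul_assoc, ← Finset.mul_sum]
    by_cases hrow : row.1 < l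
    · rw [toprow_sum H hloc _ _ _ _ _ _ hrow, toprow_sum H hloc _ _ _ _ _ _ hrow]
      ring
    · set k : Fin u := ⟨row.1 - l, by omega⟩ with hkdef
      have hrowk : row = (⟨l + k.1, by omega⟩ : Fin (l + u)) := by
        apply Fin.ext; simp [hkdef]; omega
      rw [hrowk, coefF_sum, coefF_sum]
      have := congrFun h k
      simp only [vvec, Pi.smul_apply, smul_eq_mul] at this
      rw [show (H ⟨l + k.1, by omega⟩ (colIdx i a) - lam * H ⟨l + k.1, by omega⟩ (colIdx i b) +
        (lam - 1) * H ⟨l + k.1, by omega⟩ (colIdx i c)) = vvec H i a b c lam k from rfl]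
      rw [show (H ⟨l + k.1, by omega⟩ (colIdx i' a') - lam' * H ⟨l + k.1, by omega⟩ (colIdx i' b') +
        (lam' - 1) * H ⟨l + k.1, by omega⟩ (colIdx i' c')) = vvec H i' a' b' c' lam' k from rfl]
      rw [congrFun h k]
      simp

lemma vvec_ne_zero (hloc : ∀ i : Fin (l + u), i.val < l →
      ∀ j : Fin (l * (r + 1)), H i j = if j.val / (r + 1) = i.val then 1 else 0)
    (hind : ∀ s : Finset (Fin (l * (r + 1))), s.card ≤ 6 →
      LinearIndependent F (fun j : {x // x ∈ s} => (fun i => H i j.1)))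
    (i : Fin l) (a b c : Fin (r + 1)) (hab : a ≠ b) (hac : a ≠ c) (lam : F) :
    vvec H i a b c lam ≠ 0 := by
  intro h0
  have hz := key H hind {colIdx i a, colIdx i b, colIdx i c}
    ((card_le_three _ _ _).trans (by omega))
    (coefF i a b c lam) (fun j hne => by
      rcases coefF_support hne with h1 | h1 | h1 <;> simp [h1]) ?_ (colIdx i a)
  · rw [coefF_apply_a hab hac] at hz
    exact one_ne_zero hz
  · intro row
    by_cases hrow : row.1 < l
    · exact toprow_sum H hloc _ _ _ _ _ _ hrow
    · set k : Fin u := ⟨row.1 - l, by omega⟩ with hkdef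
      have hrowk : row = (⟨l + k.1, by omega⟩ : Fin (l + u)) := by
        apply Fin.ext; simp [hkdef]; omega
      rw [hrowk, coefF_sum]
      have := congrFun h0 k
      simpa [vvec] using this

end main

section pure
variable {F : Type} [Field F] {l r : ℕ}

lemma step1 {i i' : Fin l} {a b c a' b' c' : Fin (r + 1)} {lam lam' ν : F}
    (eq : ∀ j, coefF i a b c lam j = ν * coefF i' a' b' c' lam' j)
    (hab : a ≠ b) (hac : a ≠ c) (hbc : b ≠ c)
    (hlam0 : lam ≠ 0) (hlam1 : lam ≠ 1) :
    i = i' ∧ ({a, b, c} : Finset (Fin (r + 1))) ⊆ {a', b', c'} := by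
  have mem : ∀ x : Fin (r + 1), coefF i a b c lam (colIdx i x) ≠ 0 →
      i = i' ∧ x ∈ ({a', b', c'} : Finset (Fin (r + 1))) := by
    intro x hx
    have h2 : coefF i' a' b' c' lam' (colIdx i x) ≠ 0 := by
      intro hzero
      apply hx
      rw [eq (colIdx i x), hzero, mul_zero]
    rcases coefF_support h2 with h1 | h1 | h1 <;>
      obtain ⟨hi, hx'⟩ := colIdx_inj h1 <;> exact ⟨hi, by simp [hx']⟩
  have hne1 : coefF i a b c lam (colIdx i a) ≠ 0 := by
    rw [coefF_apply_a hab hac]; exact one_ne_zero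
  have hne2 : coefF i a b c lam (colIdx i b) ≠ 0 := by
    rw [coefF_apply_b hab hbc]; exact neg_ne_zero.mpr hlam0
  have hne3 : coefF i a b c lam (colIdx i c) ≠ 0 := by
    rw [coefF_apply_c hac hbc]; exact sub_ne_zero.mpr hlam1
  refine ⟨(mem a hne1).1, ?_⟩
  intro x hx
  simp only [Finset.mem_insert, Finset.mem_singleton] at hx
  rcases hx with rfl | rfl | rfl
  · exact (mem x hne1).2
  · exact (mem x hne2).2
  · exact (mem x hne3).2

lemma step2 {i : Fin l} {a b c : Fin (r + 1)} {lam lam' ν : F}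
    (eq : ∀ j, coefF i a b c lam j = ν * coefF i a b c lam' j)
    (hab : a ≠ b) (hac : a ≠ c) (hbc : b ≠ c) :
    ν = 1 ∧ lam = lam' := by
  have e1 := eq (colIdx i a)
  rw [coefF_apply_a hab hac, coefF_apply_a hab hac, mul_one] at e1
  have hν : ν = 1 := e1.symm
  have e2 := eq (colIdx i b)
  rw [coefF_apply_b hab hbc, coefF_apply_b hab hbc, hν, one_mul] at e2
  exact ⟨hν, neg_injective e2⟩

end pure

section vd
variable {F : Type} [Field F] {l r u : ℕ}
variable (H : Matrix (Fin (l + u)) (Fin (l * (r + 1))) F)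

noncomputable def vD
    (d : Fin l × {s : Finset (Fin (r + 1)) // s.card = 3} × {x : F // x ≠ 0 ∧ x ≠ 1}) :
    Fin u → F :=
  vvec H d.1 (trip3 d.2.1.1 d.2.1.2).1 (trip3 d.2.1.1 d.2.1.2).2.1
    (trip3 d.2.1.1 d.2.1.2).2.2 d.2.2.1

lemma vD_ne_zero (hloc : ∀ i : Fin (l + u), i.val < l →
      ∀ j : Fin (l * (r + 1)), H i j = if j.val / (r + 1) = i.val then 1 else 0)
    (hind : ∀ s : Finset (Fin (l * (r + 1))), s.card ≤ 6 →
      LinearIndependent F (fun j : {x // x ∈ s} => (fun i => H i j.1)))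
    (d : Fin l × {s : Finset (Fin (r + 1)) // s.card = 3} × {x : F // x ≠ 0 ∧ x ≠ 1}) :
    vD H d ≠ 0 := by
  obtain ⟨hab, hac, hbc, hseq⟩ := trip3_spec d.2.1.1 d.2.1.2
  exact vvec_ne_zero H hloc hind _ _ _ _ hab hac _

lemma vD_inj (hloc : ∀ i : Fin (l + u), i.val < l →
      ∀ j : Fin (l * (r + 1)), H i j = if j.val / (r + 1) = i.val then 1 else 0)
    (hind : ∀ s : Finset (Fin (l * (r + 1))), s.card ≤ 6 →
      LinearIndependent F (fun j : {x // x ∈ s} => (fun i => H i j.1)))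
    (d d' : Fin l × {s : Finset (Fin (r + 1)) // s.card = 3} × {x : F // x ≠ 0 ∧ x ≠ 1})
    (ν : F) (hν : ν ≠ 0) (h : vD H d = ν • vD H d') : d = d' ∧ ν = 1 := by
  obtain ⟨i, ⟨s, hs⟩, ⟨lam, hlam0, hlam1⟩⟩ := d
  obtain ⟨i', ⟨s', hs'⟩, ⟨lam', hlam0', hlam1'⟩⟩ := d'
  obtain ⟨hab, hac, hbc, hseq⟩ := trip3_spec s hs
  obtain ⟨hab', hac', hbc', hseq'⟩ := trip3_spec s' hs'
  have eq := coef_eq H hloc hind i i' (trip3 s hs).1 (trip3 s hs).2.1 (trip3 s hs).2.2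
    (trip3 s' hs').1 (trip3 s' hs').2.1 (trip3 s' hs').2.2 lam lam' ν h
  obtain ⟨hii, hsub⟩ := step1 eq hab hac hbc hlam0 hlam1
  have hss : s = s' := by
    rw [← hseq, ← hseq'] at hsub
    exact Finset.eq_of_subset_of_card_le hsub (by rw [hs, hs'])
  subst hss
  subst hii
  obtain ⟨hν1, hlam⟩ := step2 eq hab hac hbc
  subst hlam
  exact ⟨rfl, hν1⟩

end vd

/-- bound when any ≤6 columns are independent. -/
theorem stmt_2 (q l r u : ℕ) (hq : IsPrimePow q)
    (hl : 1 ≤ l) (hr : 1 ≤ r) (hu : 1 ≤ u)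
    (F : Type) [Field F] [Fintype F] (hF : Fintype.card F = q)
    (H : Matrix (Fin (l + u)) (Fin (l * (r + 1))) F)
    (hloc : ∀ i : Fin (l + u), i.val < l →
      ∀ j : Fin (l * (r + 1)), H i j = if j.val / (r + 1) = i.val then 1 else 0)
    (hind : ∀ s : Finset (Fin (l * (r + 1))), s.card ≤ 6 →
      LinearIndependent F (fun j : {x // x ∈ s} => (fun i => H i j.1))) :
    l * ((q - 2) * Nat.choose (r + 1) 3) ≤ (q ^ u - 1) / (q - 1) := by
  classical
  have hq2 : 2 ≤ q := by
    rw [← hF]; exact Fintype.one_lt_card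
  have hcard : Fintype.card ((Fin l × {s : Finset (Fin (r + 1)) // s.card = 3} ×
        {x : F // x ≠ 0 ∧ x ≠ 1}) × {x : F // x ≠ 0}) ≤
      Fintype.card {w : Fin u → F // w ≠ 0} := by
    apply Fintype.card_le_of_injective
      (fun p => (⟨p.2.1 • vD H p.1, smul_ne_zero p.2.2 (vD_ne_zero H hloc hind p.1)⟩ :
        {w : Fin u → F // w ≠ 0}))
    intro p p' hpp
    have h1 : p.2.1 • vD H p.1 = p'.2.1 • vD H p'.1 := congrArg Subtype.val hpp
    have h2 : vD H p.1 = (p.2.1⁻¹ * p'.2.1) • vD H p'.1 := by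
      rw [mul_smul, ← h1, inv_smul_smul₀ p.2.2]
    obtain ⟨hd, hν⟩ := vD_inj H hloc hind p.1 p'.1 _
      (mul_ne_zero (inv_ne_zero p.2.2) p'.2.2) h2
    rw [inv_mul_eq_one₀ p.2.2] at hν
    exact Prod.ext hd (Subtype.ext hν)
  have cL : Fintype.card {x : F // x ≠ 0 ∧ x ≠ 1} = q - 2 := by
    rw [Fintype.card_subtype]
    have he : (Finset.univ.filter (fun x : F => x ≠ 0 ∧ x ≠ 1)) = ({0, 1} : Finset F)ᶜ := by
      ext x; simp [not_or]
    rw [he, Finset.card_compl, hF]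
    congr 1
    rw [Finset.card_insert_of_notMem (by simp), Finset.card_singleton]
  have cN : Fintype.card {x : F // x ≠ 0} = q - 1 := by
    rw [Fintype.card_subtype]
    have he : (Finset.univ.filter (fun x : F => x ≠ 0)) = ({0} : Finset F)ᶜ := by
      ext x; simp
    rw [he, Finset.card_compl, hF, Finset.card_singleton]
  have cw : Fintype.card {w : Fin u → F // w ≠ 0} = q ^ u - 1 := by
    rw [Fintype.card_subtype]
    have he : (Finset.univ.filter (fun w : Fin u → F => w ≠ 0)) =
        ({0} : Finset (Fin u → F))ᶜ := by
      ext x; simp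
    rw [he, Finset.card_compl, Finset.card_singleton, Fintype.card_fun, hF, Fintype.card_fin]
  rw [Fintype.card_prod, Fintype.card_prod, Fintype.card_prod, Fintype.card_fin,
    Fintype.card_finset_len, Fintype.card_fin, cL, cN, cw] at hcard
  rw [Nat.le_div_iff_mul_le (by omega : 0 < q - 1)]
  calc l * ((q - 2) * Nat.choose (r + 1) 3) * (q - 1)
      = l * (Nat.choose (r + 1) 3 * (q - 2)) * (q - 1) := by ring
    _ ≤ q ^ u - 1 := hcard
end

section
/- Let q be a prime power and let C be an optimal (n,k,r) LRC over F_q with k > r ≥ 1, ⌈k/r⌉ ≥ 2 and minimum distance d = n − k − ⌈k/r⌉ + 2. Let H be an (n−k)×n parity-check matrix of C whose rows form a basis of the dual code C⊥, and suppose the first l rows of H (the locality-rows) each have Hamming weight at most r+1 and their supports together cover all n coordinates. Fix any set D of ⌈k/r⌉ − 2 of these locality-rows, and let H'' be the matrix obtained from H by deleting the rows in D and all columns lying in the support of some row of D; let n'' be the number of remaining columns and let C'' = {x ∈ F_q^{n''} : H'' x^T = 0} be the linear code with parity-check matrix H''. Then C'' is an almost MDS code with minimum distance d'' = n'' − dim(C'')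 = d; in particular H'' has full rank n − k − (⌈k/r⌉ − 2). -/
/-!
Extending a word of `C''` by zeros gives a codeword of `C`, because the deleted rows vanish on
the kept columns; hence every nonzero word of `C''` has weight at least `d`. Counting the at most
`(⌈k/r⌉ - 2)(r + 1)` deleted columns, `dim C'' ≥ k - (⌈k/r⌉ - 2) r ≥ r + 1`, while any kept
locality-row restricts to a nonzero dual word of `C''` of weight at most `r + 1`. A code whose dual
contains a nonzero word of weight at most its dimension is not MDS, so `C''` has a nonzero word of
weight at most `n'' - dim C'' = rank H'' ≤ n - k - (⌈k/r⌉ - 2) = d`, and all these inequalities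
are equalities.
-/

open Finset Matrix Module Function

section Weight

variable {F ι κ : Type*} [Zero F]

theorem wt_eq_card_filter [Fintype ι] [DecidableEq F] (x : ι → F) :
    wt x = #{i | x i ≠ 0} := by
  rw [wt, ← Set.ncard_coe_finset]
  simp

theorem wt_comp_le [Finite ι] (x : ι → F) {f : κ → ι} (hf : Injective f) :
    wt (x ∘ f) ≤ wt x := by
  rw [wt, wt, ← Set.ncard_image_of_injective _ hf]
  exact Set.ncard_le_ncard (by rintro _ ⟨k, hk, rfl⟩; exact hk) (Set.toFinite _)

theorem wt_extend_zero (x : κ → F) {f : κ → ι} (hf : Injective f) :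
    wt (extend f x 0) = wt x := by
  rw [wt, wt, ← Set.ncard_image_of_injective _ hf]
  congr 1
  ext i
  by_cases hi : ∃ k, f k = i
  · obtain ⟨k, rfl⟩ := hi
    simp [hf.extend_apply, hf.eq_iff]
  · simp only [Set.mem_ofPred_eq, extend_apply' _ _ _ hi, Pi.zero_apply, ne_eq,
      not_true_eq_false, Set.mem_image, false_iff]
    exact fun ⟨k, _, hk⟩ => hi ⟨k, hk⟩

end Weight

theorem le_wt_of_extend_mem {F ι : Type*} [Semiring F] {C : Submodule F (ι → F)} {d : ℕ}
    (hmin : ∀ x ∈ C, x ≠ 0 → d ≤ wt x) {p : ι → Prop} {y : {i // p i} → F}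
    (hy : extend Subtype.val y 0 ∈ C) (hy0 : y ≠ 0) : d ≤ wt y := by
  rw [← wt_extend_zero y Subtype.val_injective]
  refine hmin _ hy fun h => hy0 (funext fun i => ?_)
  simpa [Subtype.val_injective.extend_apply] using congrFun h i

/-- If the dual of `C` contains a nonzero word of weight at most `dim C`, then `C` is not MDS. -/
theorem exists_ne_zero_wt_le_card_sub_finrank {F ι : Type*} [Field F] [Fintype ι]
    (C : Submodule F (ι → F)) {h : ι → F} (hh : h ≠ 0) (horth : ∀ x ∈ C, h ⬝ᵥ x = 0)
    (hwt : wt h ≤ finrank F C) :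
    ∃ x ∈ C, x ≠ 0 ∧ wt x ≤ Fintype.card ι - finrank F C := by
  classical
  have hdim : finrank F C ≤ Fintype.card ι := by
    simpa using Submodule.finrank_le C
  obtain ⟨T, hST, hT⟩ := exists_superset_card_eq (s := {i | h i ≠ 0})
    ((wt_eq_card_filter h).symm.trans_le hwt) hdim
  let π : C →ₗ[F] ({i // i ∈ T} → F) :=
    (LinearMap.funLeft F F Subtype.val).comp C.subtype
  -- If `π` were injective it would be onto, and the codeword restricting to the indicator of
  -- `i₀` on `T ⊇ supp h` would pair with `h` to `h i₀ ≠ 0`.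
  have hπ : ¬ Injective π := by
    intro hinj
    have hsurj := (LinearMap.injective_iff_surjective_of_finrank_eq_finrank
      (by simp [hT])).mp hinj
    obtain ⟨i₀, hi₀⟩ : ∃ i, h i ≠ 0 := Function.ne_iff.mp hh
    have hi₀T : i₀ ∈ T := hST (by simpa using hi₀)
    obtain ⟨x, hx⟩ := hsurj fun i => if i.1 = i₀ then 1 else 0
    have hterm : ∀ i, h i * (x : ι → F) i = if i = i₀ then h i₀ else 0 := by
      intro i
      by_cases hiT : i ∈ T
      · have := congrFun hx ⟨i, hiT⟩
        simp only [π, LinearMap.comp_apply, LinearMap.funLeft_apply, Submodule.subtype_apply] at this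
        rw [this]; split_ifs with hi <;> simp [hi]
      · have : h i = 0 := by_contra fun hi => hiT (hST (by simpa using hi))
        rw [this, zero_mul, if_neg (by rintro rfl; exact hiT hi₀T)]
    apply hi₀
    rw [← horth x x.2, dotProduct, Fintype.sum_congr _ _ hterm, Fintype.sum_ite_eq']
  obtain ⟨x, hxπ, hx0⟩ : ∃ x, π x = 0 ∧ x ≠ 0 := by
    simpa [injective_iff_map_eq_zero, not_forall] using hπ
  refine ⟨x, x.2, by simpa using hx0, ?_⟩
  have hsupp : ({i | (x : ι → F) i ≠ 0} : Finset ι) ⊆ Tᶜ := by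
    intro i hi
    rw [mem_compl]
    exact fun hiT => (mem_filter.mp hi).2 (congrFun hxπ ⟨i, hiT⟩)
  rw [wt_eq_card_filter, ← hT, ← card_compl]
  exact card_le_card hsupp

section ParityCheck

variable {F m ι : Type*} [Fintype ι]

theorem mulVec_extend_val [NonUnitalNonAssocSemiring F] (H : Matrix m ι F) (K : Finset ι) (x : K → F) :
    H *ᵥ extend Subtype.val x 0 = H.submatrix id Subtype.val *ᵥ x := by
  ext i
  simp only [mulVec, dotProduct, submatrix_apply, id]
  rw [← sum_subset (subset_univ K) fun j _ hj => by
    rw [extend_apply' _ _ _ fun ⟨j', hj'⟩ => hj (hj' ▸ j'.2), Pi.zero_apply, mul_zero],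
    ← sum_coe_sort K]
  simp

theorem extend_val_mem_ker [CommSemiring F] {p : m → Prop} (H : Matrix m ι F) (K : Finset ι)
    (hvanish : ∀ i, ¬ p i → ∀ j ∈ K, H i j = 0) {x : K → F}
    (hx : x ∈ LinearMap.ker (H.submatrix (Subtype.val : {i // p i} → m) Subtype.val).mulVecLin) :
    extend Subtype.val x 0 ∈ LinearMap.ker H.mulVecLin := by
  rw [LinearMap.mem_ker, mulVecLin_apply, mulVec_extend_val]
  ext i
  by_cases hi : p i
  · exact congrFun hx ⟨i, hi⟩
  · simp [mulVec, dotProduct, hvanish i hi _ (Subtype.prop _)]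

theorem eq_ker_mulVecLin_of_rows_basis [Field F] [Fintype m] {n : ℕ} (C : Submodule F (Fin n → F))
    (H : Matrix m (Fin n) F) (hind : LinearIndependent F H.row)
    (hspan : Submodule.span F (Set.range H.row) = dualCode C)
    (hcard : finrank F C + Fintype.card m = n) : C = LinearMap.ker H.mulVecLin := by
  have hle : C ≤ LinearMap.ker H.mulVecLin := fun x hx => by
    ext i
    have hrow : H i ∈ dualCode C := hspan ▸ Submodule.subset_span ⟨i, rfl⟩
    simpa [mulVec, dotProduct, mul_comm] using hrow x hx
  refine Submodule.eq_of_le_of_finrank_le hle ?_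
  have := H.mulVecLin.finrank_range_add_finrank_ker
  rw [← Matrix.rank, hind.rank_matrix] at this
  simp only [finrank_pi, Fintype.card_fin] at this
  omega

end ParityCheck

theorem card_le_card_add_mul {F m ι : Type*} [Zero F] [Fintype ι]
    (H : Matrix m ι F) (D : Finset m) (K : Finset ι) (hK : ∀ j, (∀ i ∈ D, H i j = 0) → j ∈ K)
    {w : ℕ} (hw : ∀ i ∈ D, wt (H i) ≤ w) :
    Fintype.card ι ≤ #K + #D * w := by
  classical
  calc Fintype.card ι
      ≤ #(K ∪ D.biUnion fun i => {j | H i j ≠ 0}) := by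
        rw [← card_univ]
        refine card_le_card fun j _ => ?_
        by_cases hj : ∀ i ∈ D, H i j = 0
        · exact mem_union_left _ (hK j hj)
        · simpa using Or.inr hj
    _ ≤ #K + #D * w := (card_union_le _ _).trans <| Nat.add_le_add_left
        (card_biUnion_le_card_mul _ _ _ fun i hi =>
          (wt_eq_card_filter (H i)).symm.trans_le (hw i hi)) _

theorem ceilDiv_sub_one_mul_lt {k r : ℕ} (h : 1 ≤ ceilDiv k r) : (ceilDiv k r - 1) * r < k := by
  have hr : 0 < r := by
    rcases Nat.eq_zero_or_pos r with rfl | hr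
    · simp [ceilDiv] at h
    · exact hr
  have hmul : ceilDiv k r * r ≤ k + r - 1 := Nat.div_mul_le_self _ _
  have hle : r ≤ ceilDiv k r * r := Nat.le_mul_of_pos_left r h
  rw [Nat.sub_one_mul]
  omega

theorem stmt_4_general (n k r l : ℕ)
    (F : Type) [Field F] [DecidableEq F]
    (hceil : 2 ≤ ceilDiv k r)
    (C : Submodule F (Fin n → F)) (hdim : Module.finrank F C = k)
    (d : ℕ) (hd : d = n - k - ceilDiv k r + 2)
    (hmd : isMinDist C d)
    (H : Matrix (Fin (n - k)) (Fin n) F)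
    -- the rows of H form a basis of the dual code of C
    (hHind : LinearIndependent F (fun i : Fin (n - k) => (fun j => H i j)))
    (hHspan : Submodule.span F (Set.range (fun i : Fin (n - k) => (fun j => H i j))) = dualCode C)
    -- the first l rows of H are locality-rows: weight at most r+1, supports covering all coordinates
    (hlocrows : ∀ i : Fin (n - k), i.val < l → wt (fun j => H i j) ≤ r + 1)
    (hcover : ∀ j : Fin n, ∃ i : Fin (n - k), i.val < l ∧ H i j ≠ 0)
    -- D is any set of ⌈k/r⌉ − 2 locality-rows
    (D : Finset (Fin (n - k))) (hD : ∀ i ∈ D, i.val < l)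
    (hDcard : D.card = ceilDiv k r - 2) :
    -- K : the columns remaining after deleting every column in the support of some row of D
    let K : Finset (Fin n) := Finset.univ.filter (fun j => ∀ i ∈ D, H i j = 0)
    -- H'' : the matrix obtained from H by deleting the rows of D and the deleted columns
    let H'' : Matrix {i : Fin (n - k) // i ∉ D} {j : Fin n // j ∈ K} F :=
      fun i j => H i.1 j.1
    -- C'' : the linear code with parity-check matrix H''
    let C'' : Submodule F ({j : Fin n // j ∈ K} → F) := LinearMap.ker H''.mulVecLin
    isMinDist C'' d ∧ K.card - Module.finrank F C'' = d ∧
      H''.rank = n - k - (ceilDiv k r - 2) := by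
  intro K H'' C''
  have hK : ∀ j, j ∈ K ↔ ∀ i ∈ D, H i j = 0 := fun j => by simp [K]
  have hkn : k ≤ n := by simpa [hdim] using Submodule.finrank_le C
  have hCker : C = LinearMap.ker H.mulVecLin :=
    eq_ker_mulVecLin_of_rows_basis C H hHind hHspan (by simp [hdim, hkn])
  have hlow : ∀ y ∈ C'', y ≠ 0 → d ≤ wt y := fun y hy hy0 =>
    le_wt_of_extend_mem hmd.2 (hCker ▸ extend_val_mem_ker H (p := (· ∉ D)) K
      (fun i hi j hj => (hK j).mp hj i (not_not.mp hi)) (x := y) hy) hy0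
  have hrank : H''.rank ≤ n - k - #D := by simpa using H''.rank_le_card_height
  have hnull : H''.rank + finrank F C'' = #K := by
    have := H''.mulVecLin.finrank_range_add_finrank_ker
    rwa [finrank_pi, Fintype.card_coe] at this
  have hdim'' : r + 1 ≤ finrank F C'' := by
    have hcols : n ≤ #K + #D * (r + 1) := by
      simpa using card_le_card_add_mul H D K (fun j => (hK j).mpr) fun i hi => hlocrows i (hD i hi)
    have hDle : #D ≤ n - k := by simpa using card_le_univ D
    have hlt := ceilDiv_sub_one_mul_lt (k := k) (r := r) (by omega)
    rw [show ceilDiv k r - 1 = #D + 1 by omega, add_one_mul] at hlt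
    rw [mul_add_one] at hcols
    omega
  obtain ⟨j₀, hj₀⟩ : K.Nonempty := card_pos.mp (by omega)
  obtain ⟨i, hil, hij⟩ := hcover j₀
  have hiD : i ∉ D := fun hi => hij ((hK j₀).mp hj₀ i hi)
  obtain ⟨x, hx, hx0, hwt⟩ := exists_ne_zero_wt_le_card_sub_finrank C'' (h := H'' ⟨i, hiD⟩)
    (Function.ne_iff.mpr ⟨⟨j₀, hj₀⟩, hij⟩) (fun x hx => congrFun hx _)
    ((wt_comp_le _ Subtype.val_injective).trans ((hlocrows i hil).trans hdim''))
  have hdx := hlow x hx hx0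
  rw [Fintype.card_coe] at hwt
  refine ⟨⟨⟨x, hx, hx0, by omega⟩, hlow⟩, by omega, ?_⟩
  rw [← hDcard]
  omega

/-- deleting ⌈k/r⌉ − 2 locality-rows (and the columns they cover)
from a parity-check matrix of an optimal (n,k,r) LRC yields the parity-check matrix
of an almost MDS code of minimum distance d; in particular the resulting matrix has
full rank n − k − (⌈k/r⌉ − 2). -/
theorem stmt_4 (q n k r l : ℕ) (hq : IsPrimePow q)
    (F : Type) [Field F] [Fintype F] [DecidableEq F] (hF : Fintype.card F = q)
    (hr : 1 ≤ r) (hk : r < k) (hceil : 2 ≤ ceilDiv k r)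
    (C : Submodule F (Fin n → F)) (hdim : Module.finrank F C = k)
    (d : ℕ) (hd : d = n - k - ceilDiv k r + 2)
    (hmd : isMinDist C d) (hloc : hasLocality C r)
    (H : Matrix (Fin (n - k)) (Fin n) F)
    -- the rows of H form a basis of the dual code of C
    (hHind : LinearIndependent F (fun i : Fin (n - k) => (fun j => H i j)))
    (hHspan : Submodule.span F (Set.range (fun i : Fin (n - k) => (fun j => H i j))) = dualCode C)
    -- the first l rows of H are locality-rows: weight at most r+1, supports covering all coordinates
    (hl : l ≤ n - k)
    (hlocrows : ∀ i : Fin (n - k), i.val < l → wt (fun j => H i j) ≤ r + 1)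
    (hcover : ∀ j : Fin n, ∃ i : Fin (n - k), i.val < l ∧ H i j ≠ 0)
    -- D is any set of ⌈k/r⌉ − 2 locality-rows
    (D : Finset (Fin (n - k))) (hD : ∀ i ∈ D, i.val < l)
    (hDcard : D.card = ceilDiv k r - 2) :
    -- K : the columns remaining after deleting every column in the support of some row of D
    let K : Finset (Fin n) := Finset.univ.filter (fun j => ∀ i ∈ D, H i j = 0)
    -- H'' : the matrix obtained from H by deleting the rows of D and the deleted columns
    let H'' : Matrix {i : Fin (n - k) // i ∉ D} {j : Fin n // j ∈ K} F :=
      fun i j => H i.1 j.1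
    -- C'' : the linear code with parity-check matrix H''
    let C'' : Submodule F ({j : Fin n // j ∈ K} → F) := LinearMap.ker H''.mulVecLin
    isMinDist C'' d ∧ K.card - Module.finrank F C'' = d ∧
      H''.rank = n - k - (ceilDiv k r - 2) :=
  stmt_4_general n k r l F hceil C hdim d hd hmd H hHind hHspan hlocrows hcover D hD hDcard
end

section
/- Let r ≥ 2 and p > 3 be integers with r ≥ p − 3. If there exists an optimal quaternary (r+p, r+p−3, r) LRC (which necessarily has minimum distance 3), then r + p ≤ 21. -/
set_option maxHeartbeats 1000000

/-- if an optimal quaternary (r+p, r+p−3, r) LRC exists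
(with r ≥ 2, p > 3, r ≥ p − 3), then r + p ≤ 21. -/
theorem stmt_5 (r p : ℕ) (hr : 2 ≤ r) (hp : 3 < p) (hrp : p - 3 ≤ r)
    (C : Submodule GF4 (Fin (r + p) → GF4))
    (hdim : Module.finrank GF4 C = r + p - 3)
    (hmd : isMinDist C ((r + p) - (r + p - 3) - ceilDiv (r + p - 3) r + 2))
    (hloc : hasLocality C r) :
    r + p ≤ 21 := by
  classical
  -- the minimum distance value is 3
  have hceil : ceilDiv (r + p - 3) r = 2 := by
    unfold ceilDiv
    apply Nat.div_eq_of_lt_le <;> omega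
  have h3 : ∀ x ∈ C, x ≠ 0 → 3 ≤ wt x := by
    intro x hx hx0
    have := hmd.2 x hx hx0
    rw [hceil] at this
    omega
  -- small-weight vectors are not in C
  have hwt2 : ∀ (x : Fin (r + p) → GF4) (i j : Fin (r + p)),
      (∀ l, x l ≠ 0 → l = i ∨ l = j) → x ≠ 0 → x ∉ C := by
    intro x i j hsupp hx0 hxC
    have hsub : {l | x l ≠ 0} ⊆ {i, j} := by
      intro l hl
      rcases hsupp l hl with h | h <;> simp [h]
    have : wt x ≤ 2 := by
      refine le_trans (Set.ncard_le_ncard hsub (Set.toFinite _)) ?_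
      refine le_trans (Set.ncard_insert_le _ _) ?_
      simp [Set.ncard_singleton]
    exact absurd (h3 x hxC hx0) (by omega)
  -- the quotient space has 64 elements
  have hfr : Module.finrank GF4 ((Fin (r + p) → GF4) ⧸ C) = 3 := by
    have h1 := Submodule.finrank_quotient_add_finrank C
    rw [hdim, Module.finrank_fin_fun] at h1
    omega
  haveI : Fintype GF4 := Fintype.ofFinite _
  haveI : Fintype ((Fin (r + p) → GF4) ⧸ C) := Fintype.ofFinite _
  have hcard4 : Fintype.card GF4 = 4 := by
    have := GaloisField.card 2 2 (by norm_num)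
    rw [Nat.card_eq_fintype_card] at this
    simpa using this
  have hcardV : Fintype.card ((Fin (r + p) → GF4) ⧸ C) = 64 := by
    rw [Module.card_eq_pow_finrank (K := GF4), hcard4, hfr]; norm_num
  -- the injective map
  let g : (Fin (r + p) × GF4ˣ) ⊕ Unit → (Fin (r + p) → GF4) ⧸ C := fun z =>
    match z with
    | Sum.inl (i, c) =>
        Submodule.Quotient.mk ((c : GF4) • (Pi.single i 1 : Fin (r + p) → GF4))
    | Sum.inr _ => 0
  have hg0 : ∀ (i : Fin (r + p)) (c : GF4ˣ),
      (Submodule.Quotient.mk ((c : GF4) • (Pi.single i 1 : Fin (r + p) → GF4)) :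
        (Fin (r + p) → GF4) ⧸ C) ≠ 0 := by
    intro i c h
    rw [Submodule.Quotient.mk_eq_zero] at h
    refine hwt2 _ i i ?_ ?_ h
    · intro l hl
      left
      by_contra hne
      simp [Pi.single_apply, hne] at hl
    · intro h0
      have := congrFun h0 i
      simp [Pi.single_apply] at this
  have hginj : Function.Injective g := by
    rintro (⟨i, c⟩ | ⟨⟩) (⟨j, c'⟩ | ⟨⟩) h
    · simp only [g] at h
      rw [Submodule.Quotient.eq] at h
      by_cases hij : i = j
      · subst hij
        by_cases hcc : c = c'
        · rw [hcc]
        · exfalso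
          refine hwt2 _ i i ?_ ?_ h
          · intro l hl
            left
            by_contra hne
            simp [Pi.single_apply, hne] at hl
          · intro h0
            have := congrFun h0 i
            simp [Pi.single_apply, sub_eq_zero] at this
            exact hcc (Units.ext this)
      · exfalso
        refine hwt2 _ i j ?_ ?_ h
        · intro l hl
          by_contra hne
          push_neg at hne
          simp [Pi.single_apply, hne.1, hne.2] at hl
        · intro h0
          have := congrFun h0 i
          simp [Pi.single_apply, Ne.symm hij] at this
    · exact absurd h (hg0 i c)
    · exact absurd h.symm (hg0 j c')
    · rfl
  have hle := Fintype.card_le_of_injective g hginj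
  rw [hcardV] at hle
  have hcu : Fintype.card GF4ˣ = 3 := by
    rw [Fintype.card_units, hcard4]
  simp [Fintype.card_sum, Fintype.card_prod, hcu] at hle
  omega
end

section
/- Let H be a 4×13 matrix over GF(4) with the following structure: row 1 equals (1,1,1,1,1,1, 0,0,0,0,0,0, 1); row 2 equals (0,0,0,0,0,0, 1,1,1,1,1,1, x₁) with x₁ ∈ GF(4)∖{0}; rows 3–4 restricted to columns 1–6 form a 2×6 matrix A, restricted to columns 7–12 form a 2×6 matrix B, and in column 13 have entries x₂, x₃ ∈ GF(4). Suppose that the 3×6 matrix Ã obtained by stacking the all-ones row on top of A, and the 3×6 matrix B̃ obtained by stacking the all-ones row on top of B, are each parity-check matrices of a quaternary [6,3,4] MDS code (equivalently, every 3 distinct columns of Ã are linearly independent, and likewise for B̃). Then the linear code {x ∈ GF(4)^{13} : H x^T = 0} has minimum distance at most 3; equivalently, some set of at most 3 distinct columns of H is linearly dependent. -/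
set_option maxHeartbeats 1000000
noncomputable instance : Fintype GF4 := Fintype.ofFinite _
noncomputable instance : DecidableEq GF4 := Classical.decEq _

lemma GF4_card : Fintype.card GF4 = 4 := by
  have := GaloisField.card 2 2 (by norm_num)
  rw [Nat.card_eq_fintype_card] at this; simpa using this

/-- 2x2 determinant of two vectors in the plane. -/
noncomputable def det2 (u v : GF4 × GF4) : GF4 := u.1 * v.2 - u.2 * v.1

lemma det2_self (v : GF4 × GF4) : det2 v v = 0 := by simp [det2, mul_comm]

lemma det2_smul_smul (c e : GF4) (u v : GF4 × GF4) :
    det2 (c • u) (e • v) = c * e * det2 u v := by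
  simp [det2, Prod.smul_def, smul_eq_mul]; ring

/-- slope of a direction vector, as an element of `Option GF4` (`none` = vertical). -/
noncomputable def slopeV (v : GF4 × GF4) : Option GF4 :=
  if v.1 = 0 then none else some (v.2 / v.1)

lemma det2_eq_zero_of_slopeV_eq {u v : GF4 × GF4} (h : slopeV u = slopeV v) :
    det2 u v = 0 := by
  unfold slopeV at h
  by_cases hu : u.1 = 0
  · by_cases hv : v.1 = 0
    · simp [det2, hu, hv]
    · simp [hu, hv] at h
  · by_cases hv : v.1 = 0
    · simp [hu, hv] at h
    · simp only [hu, hv, if_neg, if_false, Option.some.injEq] at h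
      field_simp at h
      unfold det2
      linear_combination -h

lemma slopeV_smul {c : GF4} (hc : c ≠ 0) (v : GF4 × GF4) :
    slopeV (c • v) = slopeV v := by
  unfold slopeV
  by_cases hv : v.1 = 0
  · simp [Prod.smul_def, hv, smul_eq_mul]
  · have : c * v.1 ≠ 0 := mul_ne_zero hc hv
    simp only [Prod.smul_def, smul_eq_mul, hv, this, if_neg]
    congr 1
    field_simp

/-- direction vector attached to a slope -/
noncomputable def vdir : Option GF4 → GF4 × GF4
  | none => (0, 1)
  | some m => (1, m)

lemma slopeV_vdir (d : Option GF4) : slopeV (vdir d) = d := by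
  cases d <;> simp [vdir, slopeV]

lemma det2_dep {u v : GF4 × GF4} (h : det2 u v = 0) :
    ∃ c d : GF4, ¬(c = 0 ∧ d = 0) ∧ c • u + d • v = 0 := by
  by_cases hu1 : u.1 = 0
  · by_cases hu2 : u.2 = 0
    · exact ⟨1, 0, by simp, by simp [Prod.ext_iff, hu1, hu2]⟩
    · refine ⟨v.2, -u.2, by simp [hu2], ?_⟩
      have hv1 : v.1 = 0 := by
        have h2 : u.2 * v.1 = 0 := by
          unfold det2 at h; linear_combination -h + v.2 * hu1
        rcases mul_eq_zero.mp h2 with h' | h'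
        · exact absurd h' hu2
        · exact h'
      rw [Prod.ext_iff]
      constructor <;>
        · simp [Prod.smul_def, smul_eq_mul, hu1, hv1]
          try ring
  · refine ⟨v.1, -u.1, by simp [hu1], ?_⟩
    rw [Prod.ext_iff]
    unfold det2 at h
    constructor
    · show v.1 * u.1 + (-u.1) * v.1 = 0
      ring
    · show v.1 * u.2 + (-u.1) * v.2 = 0
      linear_combination -h

open Finset in
lemma not_li3 {M : Type*} [AddCommGroup M] [Module GF4 M] {ι : Type*} [DecidableEq ι]
    {v : ι → M} {i j k : ι} (hij : i ≠ j) (hik : i ≠ k) (hjk : j ≠ k)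
    {c1 c2 c3 : GF4} (hne : ¬(c1 = 0 ∧ c2 = 0 ∧ c3 = 0))
    (hrel : c1 • v i + c2 • v j + c3 • v k = 0)
    {s : Finset ι} (hi : i ∈ s) (hj : j ∈ s) (hk : k ∈ s) :
    ¬ LinearIndependent GF4 (fun x : {x // x ∈ s} => v x.1) := by
  intro h
  set e : Fin 3 → {x // x ∈ s} := ![⟨i, hi⟩, ⟨j, hj⟩, ⟨k, hk⟩] with he
  have einj : Function.Injective e := by
    intro x y hxy
    fin_cases x <;> fin_cases y <;>
      simp only [he, Subtype.ext_iff, Matrix.cons_val_zero, Matrix.cons_val_one,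
        Matrix.head_cons, Matrix.cons_val_two, Matrix.tail_cons] at hxy ⊢ <;>
      first
      | rfl
      | exact absurd hxy hij
      | exact absurd hxy hik
      | exact absurd hxy hjk
      | exact absurd hxy.symm hij
      | exact absurd hxy.symm hik
      | exact absurd hxy.symm hjk
  have h2 := h.comp e einj
  have h3 := Fintype.linearIndependent_iff.mp h2 ![c1, c2, c3]
  have h4 : ∑ t : Fin 3, ![c1, c2, c3] t • (fun x : {x // x ∈ s} => v x.1) (e t) = 0 := by
    simpa [Fin.sum_univ_three, he] using hrel
  have h5 := h3 h4
  exact hne ⟨h5 0, h5 1, h5 2⟩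

noncomputable def line (p : GF4 × GF4) (d : Option GF4) : Finset (GF4 × GF4) :=
  Finset.image (fun c : GF4 => p + c • vdir d) Finset.univ

lemma vdir_param_inj (p : GF4 × GF4) (d : Option GF4) :
    Function.Injective (fun c : GF4 => p + c • vdir d) := by
  intro c c' h
  simp only [add_right_inj] at h
  cases d with
  | none =>
    simp only [vdir, Prod.smul_def, smul_eq_mul, Prod.ext_iff, mul_one] at h
    exact h.2
  | some m =>
    simp only [vdir, Prod.smul_def, smul_eq_mul, Prod.ext_iff, mul_one] at h
    exact h.1

lemma line_card (p : GF4 × GF4) (d : Option GF4) : (line p d).card = 4 := by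
  rw [line, Finset.card_image_of_injective _ (vdir_param_inj p d), Finset.card_univ, GF4_card]

lemma self_mem_line (p : GF4 × GF4) (d : Option GF4) : p ∈ line p d := by
  rw [line, Finset.mem_image]
  exact ⟨0, Finset.mem_univ _, by simp⟩

lemma line_slope {p x y : GF4 × GF4} {d : Option GF4}
    (hx : x ∈ line p d) (hy : y ∈ line p d) (hxy : x ≠ y) : slopeV (y - x) = d := by
  rw [line, Finset.mem_image] at hx hy
  obtain ⟨c, -, rfl⟩ := hx
  obtain ⟨c', -, rfl⟩ := hy
  have h1 : p + c' • vdir d - (p + c • vdir d) = (c' - c) • vdir d := by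
    rw [sub_smul]; abel
  have hcc : c' - c ≠ 0 := by
    intro h0
    exact hxy (by rw [sub_eq_zero] at h0; rw [h0])
  rw [h1, slopeV_smul hcc, slopeV_vdir]

lemma mem_line_of_slope {p x y : GF4 × GF4} {d : Option GF4}
    (hx : x ∈ line p d) (hs : slopeV (y - x) = d) (hxy : y ≠ x) : y ∈ line p d := by
  rw [line, Finset.mem_image] at hx ⊢
  obtain ⟨c, -, rfl⟩ := hx
  set v := y - (p + c • vdir d) with hv
  have hy : y = p + c • vdir d + v := by rw [hv]; abel
  have hvne : v ≠ 0 := by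
    intro h0; apply hxy; rw [hy, h0, add_zero]
  cases d with
  | none =>
    have hv1 : v.1 = 0 := by
      by_contra hcon; simp [slopeV, hcon] at hs
    refine ⟨c + v.2, Finset.mem_univ _, ?_⟩
    rw [hy]
    simp only [vdir, Prod.smul_def, smul_eq_mul, Prod.ext_iff]
    constructor
    · show p.1 + (c + v.2) * 0 = p.1 + c * 0 + v.1
      rw [hv1]; ring
    · show p.2 + (c + v.2) * 1 = p.2 + c * 1 + v.2
      ring
  | some m =>
    have hv1 : v.1 ≠ 0 := by
      intro h0; simp [slopeV, h0] at hs
    have hm : m = v.2 / v.1 := by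
      simp [slopeV, hv1] at hs; exact hs.symm
    refine ⟨c + v.1, Finset.mem_univ _, ?_⟩
    rw [hy]
    simp only [vdir, Prod.smul_def, smul_eq_mul, Prod.ext_iff]
    constructor
    · show p.1 + (c + v.1) * 1 = p.1 + c * 1 + v.1
      ring
    · show p.2 + (c + v.1) * m = p.2 + c * m + v.2
      rw [hm]; field_simp; ring

def IsArc (a : Fin 6 → GF4 × GF4) : Prop :=
  ∀ i j k : Fin 6, i ≠ j → i ≠ k → j ≠ k → det2 (a j - a i) (a k - a i) ≠ 0

lemma IsArc.inj {a : Fin 6 → GF4 × GF4} (ha : IsArc a) : Function.Injective a := by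
  intro i j h
  by_contra hij
  have hk : ∃ k : Fin 6, k ≠ i ∧ k ≠ j := by revert hij; clear h; revert i j; decide
  obtain ⟨k, hki, hkj⟩ := hk
  apply ha i j k hij (Ne.symm hki) (Ne.symm hkj)
  rw [← h, sub_self]
  simp [det2]

lemma slope_surj {a : Fin 6 → GF4 × GF4} (ha : IsArc a) (i : Fin 6) (d : Option GF4) :
    ∃ j, j ≠ i ∧ slopeV (a j - a i) = d := by
  classical
  set s := Finset.univ.erase i with hs
  set f := fun j => slopeV (a j - a i) with hf
  have hinj : Set.InjOn f s := by
    intro j hj k hk hfk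
    by_contra hjk
    exact ha i j k (Ne.symm (Finset.ne_of_mem_erase hj)) (Ne.symm (Finset.ne_of_mem_erase hk))
      hjk (det2_eq_zero_of_slopeV_eq hfk)
  have hcard : (s.image f).card = 5 := by
    rw [Finset.card_image_of_injOn hinj, hs, Finset.card_erase_of_mem (Finset.mem_univ i)]
    simp
  have huniv : s.image f = Finset.univ :=
    Finset.eq_univ_of_card _ (by rw [hcard, Fintype.card_option, GF4_card])
  have hd : d ∈ s.image f := huniv ▸ Finset.mem_univ d
  obtain ⟨j, hj, hfj⟩ := Finset.mem_image.mp hd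
  exact ⟨j, Finset.ne_of_mem_erase hj, hfj⟩

lemma line_inter_card {a : Fin 6 → GF4 × GF4} (ha : IsArc a) (p : GF4 × GF4) (d : Option GF4) :
    (line p d ∩ Finset.image a Finset.univ).card = 0 ∨
    (line p d ∩ Finset.image a Finset.univ).card = 2 := by
  classical
  set S := Finset.image a Finset.univ with hS
  set I := line p d ∩ S with hI
  by_cases hne : I = ∅
  · left; rw [hne]; rfl
  right
  obtain ⟨x, hx⟩ := Finset.nonempty_of_ne_empty hne
  have hxl : x ∈ line p d := (Finset.mem_inter.mp hx).1
  have hxS : x ∈ S := (Finset.mem_inter.mp hx).2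
  obtain ⟨i, -, hxi⟩ := Finset.mem_image.mp hxS
  -- upper bound
  have hle : I.card ≤ 2 := by
    by_contra hgt
    push_neg at hgt
    obtain ⟨u, v, w, hu, hv, hw, huv, huw, hvw⟩ := Finset.two_lt_card_iff.mp hgt
    obtain ⟨i1, -, hi1⟩ := Finset.mem_image.mp (Finset.mem_inter.mp hu).2
    obtain ⟨i2, -, hi2⟩ := Finset.mem_image.mp (Finset.mem_inter.mp hv).2
    obtain ⟨i3, -, hi3⟩ := Finset.mem_image.mp (Finset.mem_inter.mp hw).2
    have h12 : i1 ≠ i2 := fun h => huv (by rw [← hi1, ← hi2, h])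
    have h13 : i1 ≠ i3 := fun h => huw (by rw [← hi1, ← hi3, h])
    have h23 : i2 ≠ i3 := fun h => hvw (by rw [← hi2, ← hi3, h])
    apply ha i1 i2 i3 h12 h13 h23
    obtain ⟨cu, -, hcu⟩ := Finset.mem_image.mp
      (show u ∈ Finset.image _ Finset.univ from (Finset.mem_inter.mp hu).1)
    obtain ⟨cv, -, hcv⟩ := Finset.mem_image.mp
      (show v ∈ Finset.image _ Finset.univ from (Finset.mem_inter.mp hv).1)
    obtain ⟨cw, -, hcw⟩ := Finset.mem_image.mp
      (show w ∈ Finset.image _ Finset.univ from (Finset.mem_inter.mp hw).1)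
    have e2 : a i2 - a i1 = (cv - cu) • vdir d := by
      rw [hi2, hi1, ← hcv, ← hcu, sub_smul]; abel
    have e3 : a i3 - a i1 = (cw - cu) • vdir d := by
      rw [hi3, hi1, ← hcw, ← hcu, sub_smul]; abel
    rw [e2, e3, det2_smul_smul, det2_self, mul_zero]
  -- lower bound
  have hge : 1 < I.card := by
    obtain ⟨j, hji, hsj⟩ := slope_surj ha i d
    have haj : a j ≠ x := by
      rw [← hxi]; exact fun h => hji (ha.inj h)
    have hjl : a j ∈ line p d := by
      apply mem_line_of_slope hxl _ haj
      rw [← hxi]; exact hsj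
    have hjI : a j ∈ I := Finset.mem_inter.mpr ⟨hjl, Finset.mem_image_of_mem a (Finset.mem_univ j)⟩
    exact Finset.one_lt_card.mpr ⟨x, hx, a j, hjI, fun h => haj h.symm⟩
  omega

lemma inter_sdiff_helper (L S T : Finset (GF4 × GF4)) :
    L ∩ (Finset.univ \ (S ∪ T)) = L \ ((L ∩ S) ∪ (L ∩ T)) := by
  ext x
  simp only [Finset.mem_inter, Finset.mem_sdiff, Finset.mem_union, Finset.mem_univ, true_and]
  tauto

lemma arc_inter {a b : Fin 6 → GF4 × GF4} (ha : IsArc a) (hb : IsArc b) :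
    ∃ i j, a i = b j := by
  classical
  by_contra hcon
  push_neg at hcon
  set S := Finset.image a Finset.univ with hSdef
  set T := Finset.image b Finset.univ with hTdef
  have hST : Disjoint S T := by
    rw [Finset.disjoint_left]
    intro x hxS hxT
    obtain ⟨i, -, hi⟩ := Finset.mem_image.mp hxS
    obtain ⟨j, -, hj⟩ := Finset.mem_image.mp hxT
    exact hcon i j (by rw [hi, hj])
  have hScard : S.card = 6 := by
    rw [hSdef, Finset.card_image_of_injective _ ha.inj, Finset.card_univ]; simp
  have hTcard : T.card = 6 := by
    rw [hTdef, Finset.card_image_of_injective _ hb.inj, Finset.card_univ]; simp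
  set K := Finset.univ \ (S ∪ T) with hKdef
  have hPcard : Fintype.card (GF4 × GF4) = 16 := by
    rw [Fintype.card_prod, GF4_card]
  have hKcard : K.card = 4 := by
    rw [hKdef, Finset.card_sdiff_of_subset (Finset.subset_univ _), Finset.card_univ, hPcard,
      Finset.card_union_of_disjoint hST, hScard, hTcard]
  obtain ⟨k0, hk0⟩ := Finset.card_pos.mp (by rw [hKcard]; norm_num)
  have key : ∀ d : Option GF4, ∃ q, q ∈ K ∧ q ≠ k0 ∧ slopeV (q - k0) = d := by
    intro d
    have h4 := line_card k0 d
    have hSI := line_inter_card ha k0 d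
    have hTI := line_inter_card hb k0 d
    rw [← hSdef] at hSI
    rw [← hTdef] at hTI
    have e1 : line k0 d ∩ K = line k0 d \ ((line k0 d ∩ S) ∪ (line k0 d ∩ T)) := by
      rw [hKdef]
      exact inter_sdiff_helper _ S T
    have hsub : (line k0 d ∩ S) ∪ (line k0 d ∩ T) ⊆ line k0 d := by
      intro x hx
      rcases Finset.mem_union.mp hx with h | h
      · exact (Finset.mem_inter.mp h).1
      · exact (Finset.mem_inter.mp h).1
    have hdisj : Disjoint (line k0 d ∩ S) (line k0 d ∩ T) :=
      Disjoint.mono Finset.inter_subset_right Finset.inter_subset_right hST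
    have ecard : (line k0 d ∩ K).card =
        4 - ((line k0 d ∩ S).card + (line k0 d ∩ T).card) := by
      rw [e1, Finset.card_sdiff_of_subset hsub, Finset.card_union_of_disjoint hdisj, h4]
    have hk0mem : k0 ∈ line k0 d ∩ K := Finset.mem_inter.mpr ⟨self_mem_line k0 d, hk0⟩
    have hpos : 0 < (line k0 d ∩ K).card := Finset.card_pos.mpr ⟨k0, hk0mem⟩
    have h1lt : 1 < (line k0 d ∩ K).card := by
      rcases hSI with h | h <;> rcases hTI with h' | h' <;> omega
    obtain ⟨q, hq, hqne⟩ := Finset.exists_mem_ne h1lt k0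
    refine ⟨q, (Finset.mem_inter.mp hq).2, hqne, ?_⟩
    exact line_slope (self_mem_line k0 d) (Finset.mem_inter.mp hq).1 (Ne.symm hqne)
  choose q hqK hqne hqs using key
  have hmem : ∀ d, q d ∈ K.erase k0 := fun d => Finset.mem_erase.mpr ⟨hqne d, hqK d⟩
  set ψ : Option GF4 → {x // x ∈ K.erase k0} := fun d => ⟨q d, hmem d⟩ with hψ
  have hψinj : Function.Injective ψ := by
    intro d d' h
    have : q d = q d' := congrArg Subtype.val h
    rw [← hqs d, ← hqs d', this]
  have hcard5 : Fintype.card (Option GF4) ≤ Fintype.card {x // x ∈ K.erase k0} :=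
    Fintype.card_le_of_injective ψ hψinj
  rw [Fintype.card_option, GF4_card, Fintype.card_coe,
    Finset.card_erase_of_mem hk0, hKcard] at hcard5
  omega

lemma isArc_of_cols (A : Matrix (Fin 2) (Fin 6) GF4)
    (hA : ∀ s : Finset (Fin 6), s.card = 3 →
      LinearIndependent GF4 (fun j : {x // x ∈ s} => ![(1 : GF4), A 0 j.1, A 1 j.1])) :
    IsArc (fun i => (A 0 i, A 1 i)) := by
  intro i j k hij hik hjk
  by_contra hdet
  simp only [] at hdet
  obtain ⟨c, d, hcd, hrel⟩ := det2_dep hdet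
  have h1 : c * (A 0 j - A 0 i) + d * (A 0 k - A 0 i) = 0 := by
    have := congrArg Prod.fst hrel
    simpa [Prod.smul_def, smul_eq_mul] using this
  have h2 : c * (A 1 j - A 1 i) + d * (A 1 k - A 1 i) = 0 := by
    have := congrArg Prod.snd hrel
    simpa [Prod.smul_def, smul_eq_mul] using this
  set v : Fin 6 → (Fin 3 → GF4) := fun x => ![(1 : GF4), A 0 x, A 1 x] with hv
  have hrel' : (-(c + d)) • v i + c • v j + d • v k = 0 := by
    funext r
    fin_cases r
    · show -(c + d) * 1 + c * 1 + d * 1 = 0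
      ring
    · show -(c + d) * A 0 i + c * A 0 j + d * A 0 k = 0
      linear_combination h1
    · show -(c + d) * A 1 i + c * A 1 j + d * A 1 k = 0
      linear_combination h2
  have hne : ¬(-(c + d) = 0 ∧ c = 0 ∧ d = 0) := by
    rintro ⟨-, hc, hd⟩
    exact hcd ⟨hc, hd⟩
  have hs : ({i, j, k} : Finset (Fin 6)).card = 3 :=
    Finset.card_eq_three.mpr ⟨i, j, k, hij, hik, hjk, rfl⟩
  exact not_li3 hij hik hjk hne hrel' (by simp) (by simp) (by simp) (hA _ hs)

lemma isArc_transform {x1 x2 x3 : GF4} (hx1 : x1 ≠ 0) (B : Matrix (Fin 2) (Fin 6) GF4)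
    (hb : IsArc (fun i => (B 0 i, B 1 i))) :
    IsArc (fun i => (x2 - x1 * B 0 i, x3 - x1 * B 1 i)) := by
  intro i j k hij hik hjk
  by_contra hdet
  simp only [] at hdet
  apply hb i j k hij hik hjk
  have key : det2 ((x2 - x1 * B 0 j, x3 - x1 * B 1 j) - (x2 - x1 * B 0 i, x3 - x1 * B 1 i))
      ((x2 - x1 * B 0 k, x3 - x1 * B 1 k) - (x2 - x1 * B 0 i, x3 - x1 * B 1 i)) =
      x1 * x1 * det2 ((B 0 j, B 1 j) - (B 0 i, B 1 i)) ((B 0 k, B 1 k) - (B 0 i, B 1 i)) := by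
    simp only [det2, Prod.mk_sub_mk]
    ring
  rw [key] at hdet
  rcases mul_eq_zero.mp hdet with h | h
  · exact absurd (by rcases mul_eq_zero.mp h with h' | h' <;> exact h') hx1
  · exact h


/-- Lemma about the forbidden structure: a 4×13 matrix of the given
shape has three (or fewer) linearly dependent columns, i.e. the code it checks has
minimum distance at most 3. -/
theorem stmt_6 (H : Matrix (Fin 4) (Fin 13) GF4)
    (A B : Matrix (Fin 2) (Fin 6) GF4) (x1 x2 x3 : GF4) (hx1 : x1 ≠ 0)
    (hrow0 : ∀ j : Fin 13, H 0 j = if j.val < 6 then 1 else if j.val < 12 then 0 else 1)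
    (hrow1 : ∀ j : Fin 13, H 1 j = if j.val < 6 then 0 else if j.val < 12 then 1 else x1)
    (hrow2 : ∀ j : Fin 13, H 2 j =
      if h : j.val < 6 then A 0 ⟨j.val, h⟩
      else if h' : j.val < 12 then B 0 ⟨j.val - 6, by omega⟩ else x2)
    (hrow3 : ∀ j : Fin 13, H 3 j =
      if h : j.val < 6 then A 1 ⟨j.val, h⟩
      else if h' : j.val < 12 then B 1 ⟨j.val - 6, by omega⟩ else x3)
    -- Ã (the all-ones row stacked on A) has every 3 distinct columns linearly independent
    (hA : ∀ s : Finset (Fin 6), s.card = 3 →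
      LinearIndependent GF4 (fun j : {x // x ∈ s} => ![(1 : GF4), A 0 j.1, A 1 j.1]))
    -- B̃ (the all-ones row stacked on B) has every 3 distinct columns linearly independent
    (hB : ∀ s : Finset (Fin 6), s.card = 3 →
      LinearIndependent GF4 (fun j : {x // x ∈ s} => ![(1 : GF4), B 0 j.1, B 1 j.1])) :
    ∃ s : Finset (Fin 13), s.Nonempty ∧ s.card ≤ 3 ∧
      ¬ LinearIndependent GF4 (fun j : {x // x ∈ s} => (fun i => H i j.1)) := by
  classical
  have harcA : IsArc (fun i => (A 0 i, A 1 i)) := isArc_of_cols A hA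
  have harcB : IsArc (fun i => (B 0 i, B 1 i)) := isArc_of_cols B hB
  have harcT : IsArc (fun i => (x2 - x1 * B 0 i, x3 - x1 * B 1 i)) :=
    isArc_transform hx1 B harcB
  obtain ⟨i, j, hij⟩ := arc_inter harcA harcT
  have h2 : A 0 i = x2 - x1 * B 0 j := congrArg Prod.fst hij
  have h3 : A 1 i = x3 - x1 * B 1 j := congrArg Prod.snd hij
  set I1 : Fin 13 := ⟨i.1, by omega⟩ with hI1
  set I2 : Fin 13 := ⟨6 + j.1, by omega⟩ with hI2
  set I3 : Fin 13 := ⟨12, by omega⟩ with hI3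
  have hi6 : i.1 < 6 := i.isLt
  have hj6 : j.1 < 6 := j.isLt
  have hI12 : I1 ≠ I2 := by rw [hI1, hI2, Fin.ne_iff_vne]; show i.1 ≠ 6 + j.1; omega
  have hI13 : I1 ≠ I3 := by rw [hI1, hI3, Fin.ne_iff_vne]; show i.1 ≠ 12; omega
  have hI23 : I2 ≠ I3 := by rw [hI2, hI3, Fin.ne_iff_vne]; show 6 + j.1 ≠ 12; omega
  -- column values
  have c01 : H 0 I1 = 1 := by rw [hrow0]; exact if_pos hi6
  have c11 : H 1 I1 = 0 := by rw [hrow1]; exact if_pos hi6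
  have c21 : H 2 I1 = A 0 i := by
    rw [hrow2, dif_pos (show (I1 : Fin 13).1 < 6 from hi6)]
  have c31 : H 3 I1 = A 1 i := by
    rw [hrow3, dif_pos (show (I1 : Fin 13).1 < 6 from hi6)]
  have hn6 : ¬((I2 : Fin 13).1 < 6) := by show ¬(6 + j.1 < 6); omega
  have h12' : (I2 : Fin 13).1 < 12 := by show 6 + j.1 < 12; omega
  have c02 : H 0 I2 = 0 := by rw [hrow0]; rw [if_neg hn6, if_pos h12']
  have c12 : H 1 I2 = 1 := by rw [hrow1]; rw [if_neg hn6, if_pos h12']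
  have hjeq : (⟨(I2 : Fin 13).1 - 6, by omega⟩ : Fin 6) = j := by
    apply Fin.ext; show 6 + j.1 - 6 = j.1; omega
  have c22 : H 2 I2 = B 0 j := by
    rw [hrow2, dif_neg hn6, dif_pos h12', hjeq]
  have c32 : H 3 I2 = B 1 j := by
    rw [hrow3, dif_neg hn6, dif_pos h12', hjeq]
  have hn6' : ¬((I3 : Fin 13).1 < 6) := by show ¬(12 < 6); omega
  have hn12 : ¬((I3 : Fin 13).1 < 12) := by show ¬(12 < 12); omega
  have c03 : H 0 I3 = 1 := by rw [hrow0, if_neg hn6', if_neg hn12]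
  have c13 : H 1 I3 = x1 := by rw [hrow1, if_neg hn6', if_neg hn12]
  have c23 : H 2 I3 = x2 := by rw [hrow2, dif_neg hn6', dif_neg hn12]
  have c33 : H 3 I3 = x3 := by rw [hrow3, dif_neg hn6', dif_neg hn12]
  have hrel : (1 : GF4) • (fun r => H r I1) + (x1 : GF4) • (fun r => H r I2) +
      (-1 : GF4) • (fun r => H r I3) = (0 : Fin 4 → GF4) := by
    funext r
    fin_cases r
    · simp only [Pi.add_apply, Pi.smul_apply, smul_eq_mul, Pi.zero_apply, Fin.zero_eta]
      rw [c01, c02, c03]; ring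
    · simp only [Pi.add_apply, Pi.smul_apply, smul_eq_mul, Pi.zero_apply, Fin.mk_one]
      rw [c11, c12, c13]; ring
    · simp only [Pi.add_apply, Pi.smul_apply, smul_eq_mul, Pi.zero_apply]
      rw [show ((⟨2, by omega⟩ : Fin 4)) = (2 : Fin 4) from rfl, c21, c22, c23]
      linear_combination h2
    · simp only [Pi.add_apply, Pi.smul_apply, smul_eq_mul, Pi.zero_apply]
      rw [show ((⟨3, by omega⟩ : Fin 4)) = (3 : Fin 4) from rfl, c31, c32, c33]
      linear_combination h3
  refine ⟨{I1, I2, I3}, ⟨I1, by simp⟩, ?_, ?_⟩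
  · apply le_trans (Finset.card_insert_le _ _)
    apply Nat.succ_le_succ
    apply le_trans (Finset.card_insert_le _ _)
    simp
  · refine not_li3 (v := fun c : Fin 13 => (fun r => H r c)) hI12 hI13 hI23 ?_ hrel ?_ ?_ ?_
    · rintro ⟨h1, -, -⟩
      exact one_ne_zero h1
    · exact Finset.mem_insert_self _ _
    · exact Finset.mem_insert_of_mem (Finset.mem_insert_self _ _)
    · exact Finset.mem_insert_of_mem (Finset.mem_insert_of_mem (Finset.mem_singleton_self _))
end

section
/- Let à be a 3×6 matrix over GF(4) whose first row is the all-ones vector and such that every 3 distinct columns of à are linearly independent (i.e., à is a parity-check matrix of a quaternary [6,3,4] MDS code), with columns a₁,…,a₆. Then: (a) if {i₁,i₂} and {j₁,j₂} are distinct 2-subsets of {1,…,6} such that a_{i₁}+a_{i₂} is a nonzero scalar multiple of a_{j₁}+a_{j₂}, then {i₁,i₂} ∩ {j₁,j₂} = ∅; and (b) for every nonzero vector v ∈ GF(4)³ whose first coordinate is 0, the number of 2-subsets {i,j} of {1,…,6} with a_i + a_j a nonzero scalar multiple of v is exactly 3. -/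
lemma GF4.two_eq_zero : (2:GF4) = 0 := by
  have := CharP.cast_eq_zero GF4 2; exact_mod_cast this

section main
variable (Atil : Matrix (Fin 3) (Fin 6) GF4)

def col (j : Fin 6) : Fin 3 → GF4 := fun i => Atil i j

variable (hones : ∀ j : Fin 6, Atil 0 j = 1)
variable (hind : ∀ s : Finset (Fin 6), s.card = 3 →
      LinearIndependent GF4 (fun j : {x // x ∈ s} => (fun i => Atil i j.1)))

include hind in
lemma lin3 {i j k : Fin 6} (hij : i ≠ j) (hik : i ≠ k) (hjk : j ≠ k)
    {c1 c2 c3 : GF4} (h : c1 • col Atil i + c2 • col Atil j + c3 • col Atil k = 0) :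
    c1 = 0 ∧ c2 = 0 ∧ c3 = 0 := by
  classical
  set s : Finset (Fin 6) := {i, j, k} with hs
  have hcard : s.card = 3 := by
    rw [hs, Finset.card_insert_of_notMem (by simp [hij, hik]),
      Finset.card_insert_of_notMem (by simp [hjk]), Finset.card_singleton]
  have H := (Fintype.linearIndependent_iff).1 (hind s hcard)
  set G : Fin 6 → GF4 := fun t => if t = i then c1 else if t = j then c2 else c3 with hG
  have hsum : ∑ x : {x // x ∈ s}, G x.1 • (fun t => Atil t x.1) = 0 := by
    have e1 : (∑ x : {x // x ∈ s}, G x.1 • (fun t => Atil t x.1))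
        = ∑ x ∈ s, G x • (fun t => Atil t x) :=
      (Finset.sum_subtype s (fun x => Iff.rfl) (fun x => G x • (fun t => Atil t x))).symm
    rw [e1, hs, Finset.sum_insert (by simp [hij, hik]), Finset.sum_insert (by simp [hjk]),
      Finset.sum_singleton]
    simp only [hG, if_pos rfl, if_neg (Ne.symm hij), if_neg (Ne.symm hik), if_neg (Ne.symm hjk)]
    rw [add_assoc] at h; exact h
  have := H (fun x => G x.1) hsum
  refine ⟨?_, ?_, ?_⟩
  · have := this ⟨i, by simp [hs]⟩; simpa [hG] using this
  · have := this ⟨j, by simp [hs]⟩; simpa [hG, Ne.symm hij] using this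
  · have := this ⟨k, by simp [hs]⟩; simpa [hG, Ne.symm hik, Ne.symm hjk] using this

include hind in
lemma helperL {i j k : Fin 6} (hij : i ≠ j) (hik : i ≠ k) (hjk : j ≠ k)
    {lam : GF4} (hlam : lam ≠ 0)
    (h : col Atil i + col Atil j = lam • (col Atil k + col Atil j)) : False := by
  have key : (1:GF4) • col Atil i + (1 + lam) • col Atil j + lam • col Atil k = 0 := by
    funext t
    have ht := congrFun h t
    have h2 := GF4.two_eq_zero
    simp only [Pi.add_apply, Pi.smul_apply, smul_eq_mul, Pi.zero_apply] at ht ⊢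
    linear_combination ht + (lam * col Atil j t + lam * col Atil k t) * h2
  have := (lin3 Atil hind hij hik hjk key).1
  exact one_ne_zero this

include hind in
lemma sum_ne {i j : Fin 6} (hij : i ≠ j) : col Atil i + col Atil j ≠ 0 := by
  classical
  have hcompl : (({i, j} : Finset (Fin 6))ᶜ).Nonempty := by
    rw [← Finset.card_pos, Finset.card_compl]
    have : ({i, j} : Finset (Fin 6)).card ≤ 2 := Finset.card_insert_le _ _
    simp only [Fintype.card_fin]
    omega
  obtain ⟨k, hk⟩ := hcompl
  simp only [Finset.mem_compl, Finset.mem_insert, Finset.mem_singleton, not_or] at hk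
  intro h
  have key : (1:GF4) • col Atil i + (1:GF4) • col Atil j + (0:GF4) • col Atil k = 0 := by
    simpa using h
  exact one_ne_zero (lin3 Atil hind hij (Ne.symm hk.1) (Ne.symm hk.2) key).1

include hind in
lemma parta : ∀ i₁ i₂ j₁ j₂ : Fin 6, i₁ ≠ i₂ → j₁ ≠ j₂ →
      ({i₁, i₂} : Finset (Fin 6)) ≠ ({j₁, j₂} : Finset (Fin 6)) →
      (∃ lam : GF4, lam ≠ 0 ∧
        col Atil i₁ + col Atil i₂ = lam • (col Atil j₁ + col Atil j₂)) →
      ({i₁, i₂} ∩ {j₁, j₂} : Finset (Fin 6)) = ∅ := by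
  intro i₁ i₂ j₁ j₂ h12 hj12 hne ⟨lam, hlam, heq⟩
  have pairext : ∀ a b c d : Fin 6, a = c → b = d → ({a,b} : Finset (Fin 6)) = {c,d} := by
    intro a b c d h1 h2; rw [h1, h2]
  have pairswap : ∀ a b : Fin 6, ({a,b} : Finset (Fin 6)) = {b,a} := by
    intro a b; exact Finset.pair_comm a b
  have n22 : i₂ = j₂ → i₁ ≠ j₁ := fun h h' => hne (pairext _ _ _ _ h' h)
  have n21 : i₂ = j₁ → i₁ ≠ j₂ := fun h h' => hne (by rw [h, h', pairswap])
  have n12 : i₁ = j₂ → i₂ ≠ j₁ := fun h h' => hne (by rw [h, h', pairswap])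
  have n11 : i₁ = j₁ → i₂ ≠ j₂ := fun h h' => hne (pairext _ _ _ _ h h')
  have c22 : i₂ ≠ j₂ := by
    intro h; subst h
    exact helperL Atil hind h12 (n22 rfl) (Ne.symm hj12) hlam heq
  have c21 : i₂ ≠ j₁ := by
    intro h; subst h
    rw [add_comm (col Atil i₂)] at heq
    exact helperL Atil hind h12 (n21 rfl) hj12 hlam heq
  have c12 : i₁ ≠ j₂ := by
    intro h; subst h
    rw [add_comm (col Atil i₁)] at heq
    exact helperL Atil hind (Ne.symm h12) (n12 rfl) (Ne.symm hj12) hlam heq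
  have c11 : i₁ ≠ j₁ := by
    intro h; subst h
    rw [add_comm (col Atil i₁), add_comm (col Atil i₁)] at heq
    exact helperL Atil hind (Ne.symm h12) (n11 rfl) hj12 hlam heq
  apply Finset.eq_empty_iff_forall_notMem.2
  intro x hx
  simp only [Finset.mem_inter, Finset.mem_insert, Finset.mem_singleton] at hx
  rcases hx with ⟨h1 | h1, h2 | h2⟩ <;> subst h1 <;> [exact c11 h2; exact c12 h2; exact c21 h2; exact c22 h2]

def prel (w v : Fin 3 → GF4) : Prop := ∃ lam : GF4, lam ≠ 0 ∧ w = lam • v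

lemma prel_symm {w v : Fin 3 → GF4} (h : prel w v) : prel v w := by
  obtain ⟨l, hl, e⟩ := h
  exact ⟨l⁻¹, inv_ne_zero hl, by rw [e, smul_smul, inv_mul_cancel₀ hl, one_smul]⟩

lemma prel_trans {u w v : Fin 3 → GF4} (h1 : prel u w) (h2 : prel w v) : prel u v := by
  obtain ⟨l1, hl1, e1⟩ := h1
  obtain ⟨l2, hl2, e2⟩ := h2
  exact ⟨l1 * l2, mul_ne_zero hl1 hl2, by rw [e1, e2, smul_smul]⟩

noncomputable def rep : Option GF4 → Fin 3 → GF4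
  | some x => ![0, 1, x]
  | none => ![0, 0, 1]

lemma rep_classify (w : Fin 3 → GF4) (hw : w ≠ 0) (h0 : w 0 = 0) :
    ∃ t, prel w (rep t) := by
  by_cases h1 : w 1 = 0
  · have h2 : w 2 ≠ 0 := by
      intro h2; apply hw; funext i; fin_cases i <;> simpa [h0, h1]
    exact ⟨none, w 2, h2, by funext i; fin_cases i <;> simp [rep, h0, h1]⟩
  · refine ⟨some ((w 1)⁻¹ * w 2), w 1, h1, ?_⟩
    funext i; fin_cases i <;> simp [rep, h0]
    rw [← mul_assoc, mul_inv_cancel₀ h1, one_mul]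

lemma rep_unique {t t' : Option GF4} (h : prel (rep t) (rep t')) : t = t' := by
  obtain ⟨l, hl, e⟩ := h
  match t, t' with
  | some x, some x' =>
    have e1 := congrFun e 1
    have e2 := congrFun e 2
    simp [rep] at e1 e2
    subst e1
    simp at e2
    rw [e2]
  | some x, none =>
    have e1 := congrFun e 1
    simp [rep] at e1
  | none, some x' =>
    have e1 := congrFun e 1
    simp [rep] at e1
    exact absurd e1.symm hl
  | none, none => rfl

include hind in
lemma pair_disjoint {p q : Finset (Fin 6)} (hp : p.card = 2) (hq : q.card = 2)
    (hpq : p ≠ q) (h : prel (∑ j ∈ p, col Atil j) (∑ j ∈ q, col Atil j)) :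
    Disjoint p q := by
  obtain ⟨i₁, i₂, h12, rfl⟩ := Finset.card_eq_two.1 hp
  obtain ⟨j₁, j₂, hj12, rfl⟩ := Finset.card_eq_two.1 hq
  obtain ⟨lam, hlam, e⟩ := h
  rw [Finset.sum_pair h12, Finset.sum_pair hj12] at e
  rw [Finset.disjoint_iff_inter_eq_empty]
  exact parta Atil hind i₁ i₂ j₁ j₂ h12 hj12 hpq ⟨lam, hlam, e⟩

include hones hind in
lemma partb (v : Fin 3 → GF4) (hv : v ≠ 0) (hv0 : v 0 = 0) :
    {s : Finset (Fin 6) | ∃ i j : Fin 6, i ≠ j ∧ s = {i, j} ∧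
        ∃ lam : GF4, lam ≠ 0 ∧ col Atil i + col Atil j = lam • v}.ncard = 3 := by
  classical
  letI : Fintype GF4 := Fintype.ofFinite _
  set σ : Finset (Fin 6) → (Fin 3 → GF4) := fun p => ∑ j ∈ p, col Atil j with hσ
  set P : Finset (Finset (Fin 6)) :=
    Finset.powersetCard 2 (Finset.univ : Finset (Fin 6)) with hP
  have hPcard : P.card = 15 := by
    rw [hP, Finset.card_powersetCard, Finset.card_univ, Fintype.card_fin]
    decide
  have hmemP : ∀ p, p ∈ P ↔ p.card = 2 := by
    intro p
    rw [hP, Finset.mem_powersetCard]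
    exact ⟨fun h => h.2, fun h => ⟨Finset.subset_univ _, h⟩⟩
  have hσne : ∀ p ∈ P, σ p ≠ 0 := by
    intro p hp
    obtain ⟨i, j, hij, rfl⟩ := Finset.card_eq_two.1 ((hmemP p).1 hp)
    rw [hσ]
    simpa [Finset.sum_pair hij] using sum_ne Atil hind hij
  have hσ0 : ∀ p ∈ P, σ p 0 = 0 := by
    intro p hp
    obtain ⟨i, j, hij, rfl⟩ := Finset.card_eq_two.1 ((hmemP p).1 hp)
    rw [hσ]
    simp only [Finset.sum_pair hij, Pi.add_apply, col, hones i, hones j]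
    have := GF4.two_eq_zero
    linear_combination this
  set f : Finset (Fin 6) → Option GF4 :=
    fun p => if h : ∃ t, prel (σ p) (rep t) then h.choose else none with hf
  have hfp : ∀ p ∈ P, prel (σ p) (rep (f p)) := by
    intro p hp
    have hex : ∃ t, prel (σ p) (rep t) := rep_classify (σ p) (hσne p hp) (hσ0 p hp)
    rw [hf]
    simp only [dif_pos hex]
    exact hex.choose_spec
  have hfiber : ∀ p ∈ P, ∀ t, f p = t ↔ prel (σ p) (rep t) := by
    intro p hp t
    constructor
    · rintro rfl; exact hfp p hp
    · intro h
      exact rep_unique (prel_trans (prel_symm (hfp p hp)) h)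
  have hbound : ∀ t : Option GF4, (P.filter (fun p => f p = t)).card ≤ 3 := by
    intro t
    set F := P.filter (fun p => f p = t) with hF
    have hdisj : ∀ p ∈ F, ∀ q ∈ F, p ≠ q → Disjoint (id p) (id q) := by
      intro p hp q hq hpq
      rw [hF, Finset.mem_filter] at hp hq
      have h1 : prel (σ p) (rep t) := (hfiber p hp.1 t).1 hp.2
      have h2 : prel (σ q) (rep t) := (hfiber q hq.1 t).1 hq.2
      exact pair_disjoint Atil hind ((hmemP p).1 hp.1) ((hmemP q).1 hq.1) hpq
        (prel_trans h1 (prel_symm h2))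
    have hcard : (F.biUnion id).card = 2 * F.card := by
      rw [Finset.card_biUnion hdisj]
      have : ∀ p ∈ F, (id p).card = 2 := by
        intro p hp
        rw [hF, Finset.mem_filter] at hp
        exact (hmemP p).1 hp.1
      rw [Finset.sum_congr rfl this, Finset.sum_const, smul_eq_mul, mul_comm]
    have hle : (F.biUnion id).card ≤ 6 := by
      have := Finset.card_le_univ (F.biUnion id)
      simpa using this
    omega
  have hsum : ∑ t : Option GF4, (P.filter (fun p => f p = t)).card = 15 := by
    rw [← Finset.card_eq_sum_card_fiberwise (fun p _ => Finset.mem_univ (f p))]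
    exact hPcard
  have hcard5 : (Finset.univ : Finset (Option GF4)).card = 5 := by
    rw [Finset.card_univ, Fintype.card_option, ← Nat.card_eq_fintype_card]
    have := GaloisField.card 2 2 (by norm_num)
    simp only [this]
    norm_num
  have heach : ∀ t : Option GF4, (P.filter (fun p => f p = t)).card = 3 := by
    intro t
    by_contra hne
    have hlt : (P.filter (fun p => f p = t)).card < 3 := lt_of_le_of_ne (hbound t) hne
    have : (∑ t' : Option GF4, (P.filter (fun p => f p = t')).card) < ∑ t' : Option GF4, 3 :=
      Finset.sum_lt_sum (fun t' _ => hbound t') ⟨t, Finset.mem_univ t, hlt⟩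
    rw [hsum, Finset.sum_const, smul_eq_mul, hcard5] at this
    omega
  obtain ⟨t, ht⟩ := rep_classify v hv hv0
  have hset : {s : Finset (Fin 6) | ∃ i j : Fin 6, i ≠ j ∧ s = {i, j} ∧
        ∃ lam : GF4, lam ≠ 0 ∧ col Atil i + col Atil j = lam • v}
      = ↑(P.filter (fun p => f p = t)) := by
    ext s
    simp only [Set.mem_setOf_eq, Finset.coe_filter, Set.mem_setOf_eq]
    constructor
    · rintro ⟨i, j, hij, rfl, lam, hlam, he⟩
      have hsP : ({i, j} : Finset (Fin 6)) ∈ P := (hmemP _).2 (Finset.card_pair hij)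
      refine ⟨hsP, ?_⟩
      rw [hfiber _ hsP t]
      have hσs : σ {i, j} = col Atil i + col Atil j := by
        rw [hσ]; simp [Finset.sum_pair hij]
      exact prel_trans (by rw [hσs]; exact ⟨lam, hlam, he⟩) ht
    · rintro ⟨hsP, hft⟩
      obtain ⟨i, j, hij, rfl⟩ := Finset.card_eq_two.1 ((hmemP _).1 hsP)
      have h1 : prel (σ {i, j}) (rep t) := (hfiber _ hsP t).1 hft
      have h2 : prel (σ {i, j}) v := prel_trans h1 (prel_symm ht)
      obtain ⟨lam, hlam, he⟩ := h2
      have he' : col Atil i + col Atil j = lam • v := by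
        rw [← Finset.sum_pair hij]; exact he
      exact ⟨i, j, hij, rfl, lam, hlam, he'⟩
  rw [hset, Set.ncard_coe_finset]
  exact heach t

end main

/-- Claim inside Lemma 4.1: for a parity-check matrix Ã of a quaternary
[6,3,4] MDS code whose first row is all ones, (a) two distinct pairs of columns whose
sums are proportional must be disjoint, and (b) every point of PG(1,4) (i.e. every
nonzero vector with first coordinate 0, up to scalars) arises from exactly three pairs. -/
theorem stmt_7 (Atil : Matrix (Fin 3) (Fin 6) GF4)
    (hones : ∀ j : Fin 6, Atil 0 j = 1)
    (hind : ∀ s : Finset (Fin 6), s.card = 3 →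
      LinearIndependent GF4 (fun j : {x // x ∈ s} => (fun i => Atil i j.1))) :
    -- (a)
    (∀ i₁ i₂ j₁ j₂ : Fin 6, i₁ ≠ i₂ → j₁ ≠ j₂ →
      ({i₁, i₂} : Finset (Fin 6)) ≠ ({j₁, j₂} : Finset (Fin 6)) →
      (∃ lam : GF4, lam ≠ 0 ∧
        (fun i => Atil i i₁) + (fun i => Atil i i₂) =
          lam • ((fun i => Atil i j₁) + (fun i => Atil i j₂))) →
      ({i₁, i₂} ∩ {j₁, j₂} : Finset (Fin 6)) = ∅)
    ∧
    -- (b)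
    (∀ v : Fin 3 → GF4, v ≠ 0 → v 0 = 0 →
      {s : Finset (Fin 6) | ∃ i j : Fin 6, i ≠ j ∧ s = {i, j} ∧
        ∃ lam : GF4, lam ≠ 0 ∧
          (fun t => Atil t i) + (fun t => Atil t j) = lam • v}.ncard = 3) := by
  exact ⟨parta Atil hind, partb Atil hones hind⟩
end

section
/- For every integer s ≥ 2, there exists a linear code over GF(4) of length 4s+3, dimension 3s+1, and minimum distance 3 that has locality 3. Since (4s+3) − (3s+1) − ⌈(3s+1)/3⌉ + 2 = 3, such a code is an optimal (4s+3, 3s+1, 3) LRC meeting the Singleton-like bound. -/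
/-! The code is the kernel of a parity-check matrix whose rows are the indicators of the blocks
`{4j, …, 4j+3}` (the last block being `{4s, 4s+1, 4s+2}`) together with one row of labels in
GF(4) that are pairwise distinct inside each block. These `s + 2` rows are linearly independent,
so the dimension is `(4s+3) - (s+2) = 3s+1`, and each block indicator is a dual codeword of weight
at most 4, which gives locality 3. A nonzero codeword of weight at most 2 would be supported on two
coordinates of one block with opposite entries, and is then killed by the label row because the
two labels differ; three coordinates of one block with distinct labels `a, b, c` carry the weight-3
codeword with entries `b - c, c - a, a - b`. -/

open Module Finset

section ParityCheck

variable {F ι : Type*} [Field F] {n : ℕ}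

def parityCheckCode (H : Matrix ι (Fin n) F) : Submodule F (Fin n → F) :=
  LinearMap.ker H.mulVecLin

lemma mem_parityCheckCode {H : Matrix ι (Fin n) F} {x : Fin n → F} :
    x ∈ parityCheckCode H ↔ ∀ r, ∑ i, x i * H r i = 0 := by
  simp only [parityCheckCode, LinearMap.mem_ker, Matrix.mulVecLin_apply, funext_iff,
    Matrix.mulVec, dotProduct, Pi.zero_apply, mul_comm (x _)]

lemma row_mem_dualCode_parityCheckCode (H : Matrix ι (Fin n) F) (r : ι) :
    H r ∈ dualCode (parityCheckCode H) :=
  fun _ hx => mem_parityCheckCode.1 hx r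

lemma finrank_parityCheckCode_add_card [Fintype ι] {H : Matrix ι (Fin n) F}
    (hH : LinearIndependent F H.row) :
    finrank F (parityCheckCode H) + Fintype.card ι = n := by
  rw [← hH.rank_matrix, Matrix.rank, add_comm, parityCheckCode,
    LinearMap.finrank_range_add_finrank_ker, finrank_fin_fun]

end ParityCheck

section GroupLabelCode

variable {F : Type*} [Field F] {n m : ℕ} (grp : Fin n → Fin m) (lbl : Fin n → F)

def groupIndicator (j : Fin m) : Fin n → F := fun i => if grp i = j then 1 else 0

lemma sum_smul_groupIndicator_apply (c : Fin m → F) (i : Fin n) :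
    (∑ j, c j • groupIndicator grp j) i = c (grp i) := by
  simp [groupIndicator]

lemma linearIndependent_groupIndicator (hgrp : Function.Surjective grp) :
    LinearIndependent F (groupIndicator (F := F) grp) := by
  refine Fintype.linearIndependent_iff.2 fun c hc j => ?_
  obtain ⟨i, rfl⟩ := hgrp j
  have hci := congrFun hc i
  rwa [sum_smul_groupIndicator_apply] at hci

lemma apply_eq_of_mem_span_groupIndicator {v : Fin n → F}
    (hv : v ∈ Submodule.span F (Set.range (groupIndicator grp))) {i i' : Fin n}
    (h : grp i = grp i') : v i = v i' := by
  obtain ⟨c, rfl⟩ := (Submodule.mem_span_range_iff_exists_fun F).1 hv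
  rw [sum_smul_groupIndicator_apply, sum_smul_groupIndicator_apply, h]

def groupLabelMatrix : Matrix (Option (Fin m)) (Fin n) F :=
  fun r => Option.casesOn' r lbl (groupIndicator grp)

def groupLabelCode : Submodule F (Fin n → F) := parityCheckCode (groupLabelMatrix grp lbl)

variable {grp lbl}

lemma mem_groupLabelCode {x : Fin n → F} :
    x ∈ groupLabelCode grp lbl ↔
      (∀ j, ∑ i, x i * groupIndicator grp j i = 0) ∧ ∑ i, x i * lbl i = 0 := by
  rw [groupLabelCode, mem_parityCheckCode, Option.forall, and_comm]
  rfl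

lemma finrank_groupLabelCode_add (hgrp : Function.Surjective grp)
    (hlbl : ∃ i i', grp i = grp i' ∧ lbl i ≠ lbl i') :
    finrank F (groupLabelCode grp lbl) + (m + 1) = n := by
  obtain ⟨i, i', hgrp_eq, hlbl_ne⟩ := hlbl
  have hrows : LinearIndependent F (groupLabelMatrix grp lbl).row :=
    (linearIndependent_groupIndicator grp hgrp).option fun hspan =>
      hlbl_ne (apply_eq_of_mem_span_groupIndicator grp hspan hgrp_eq)
  have h := finrank_parityCheckCode_add_card hrows
  rwa [Fintype.card_option, Fintype.card_fin] at h

lemma three_le_wt_of_mem_groupLabelCode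
    (hlbl : ∀ i i', grp i = grp i' → lbl i = lbl i' → i = i')
    {x : Fin n → F} (hx : x ∈ groupLabelCode grp lbl) (hx0 : x ≠ 0) : 3 ≤ wt x := by
  obtain ⟨hgroup, hlabel⟩ := mem_groupLabelCode.1 hx
  by_contra! hwt
  obtain ⟨i, hi⟩ : ∃ i, x i ≠ 0 := Function.ne_iff.1 hx0
  -- a single nonzero entry cannot make its group sum vanish
  obtain ⟨j, hji, hgrp_ji, hj⟩ : ∃ j, j ≠ i ∧ grp j = grp i ∧ x j ≠ 0 := by
    by_contra! hrest
    refine hi ?_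
    rw [← hgroup (grp i), Fintype.sum_eq_single i fun k hk => ?_]
    · simp [groupIndicator]
    · by_cases hk' : grp k = grp i
      · simp [hrest k hk hk']
      · simp [groupIndicator, hk']
  have hsupp : Function.support x = {i, j} :=
    (Set.eq_of_subset_of_ncard_le (by simp [Set.insert_subset_iff, hi, hj])
      (by rw [Set.ncard_pair hji.symm]; exact Nat.le_of_lt_succ hwt)).symm
  have hzero : ∀ k, k ≠ i ∧ k ≠ j → x k = 0 := fun k hk =>
    Function.notMem_support.1 (by simpa [hsupp] using hk)
  have hsum : ∀ v : Fin n → F, ∑ k, x k * v k = x i * v i + x j * v j := fun v =>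
    Fintype.sum_eq_add i j hji.symm fun k hk => by simp [hzero k hk]
  have hij_grp : x i + x j = 0 := by
    have h := hgroup (grp i)
    rw [hsum] at h
    simpa [groupIndicator, hgrp_ji] using h
  have hij_lbl : x i * lbl i + x j * lbl j = 0 := by rwa [hsum] at hlabel
  have : (lbl i - lbl j) * x i = 0 := by linear_combination hij_lbl - lbl j * hij_grp
  rcases mul_eq_zero.1 this with h | h
  · exact hji (hlbl j i hgrp_ji (sub_eq_zero.1 h).symm)
  · exact hi h

lemma exists_wt_eq_three_mem_groupLabelCode {i₁ i₂ i₃ : Fin n}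
    (h₁₂ : grp i₁ = grp i₂) (h₁₃ : grp i₁ = grp i₃)
    (hl₁₂ : lbl i₁ ≠ lbl i₂) (hl₁₃ : lbl i₁ ≠ lbl i₃) (hl₂₃ : lbl i₂ ≠ lbl i₃) :
    ∃ x ∈ groupLabelCode grp lbl, x ≠ 0 ∧ wt x = 3 := by
  classical
  set x : Fin n → F := Pi.single i₁ (lbl i₂ - lbl i₃) + Pi.single i₂ (lbl i₃ - lbl i₁) +
    Pi.single i₃ (lbl i₁ - lbl i₂)
  have hi₁₂ : i₁ ≠ i₂ := ne_of_apply_ne lbl hl₁₂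
  have hi₁₃ : i₁ ≠ i₃ := ne_of_apply_ne lbl hl₁₃
  have hi₂₃ : i₂ ≠ i₃ := ne_of_apply_ne lbl hl₂₃
  have hwt : wt x = 3 := by
    rw [wt, Set.ncard_eq_three]
    refine ⟨i₁, i₂, i₃, hi₁₂, hi₁₃, hi₂₃, ?_⟩
    ext k
    by_cases hk₁ : k = i₁ <;> by_cases hk₂ : k = i₂ <;> by_cases hk₃ : k = i₃ <;>
      simp_all [x, sub_eq_zero, eq_comm]
  have hsum : ∀ v : Fin n → F, ∑ k, x k * v k =
      (lbl i₂ - lbl i₃) * v i₁ + (lbl i₃ - lbl i₁) * v i₂ + (lbl i₁ - lbl i₂) * v i₃ := by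
    intro v
    simp [x, add_mul, sum_add_distrib, Pi.single_apply]
  refine ⟨x, mem_groupLabelCode.2 ⟨fun j => ?_, ?_⟩, fun h => by simp [h, wt] at hwt, hwt⟩
  · rw [hsum]
    simp only [groupIndicator, ← h₁₂, ← h₁₃]
    split_ifs <;> ring
  · rw [hsum]
    ring

lemma hasLocality_groupLabelCode {r : ℕ} (hcard : ∀ j, #{i | grp i = j} ≤ r + 1) :
    hasLocality (groupLabelCode grp lbl) r := by
  intro i
  refine ⟨groupIndicator grp (grp i),
    row_mem_dualCode_parityCheckCode (groupLabelMatrix grp lbl) (some (grp i)),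
    by simp [groupIndicator], ?_⟩
  have hsupp : {k | groupIndicator (F := F) grp (grp i) k ≠ 0} =
      ↑({k | grp k = grp i} : Finset _) := by
    ext
    simp [groupIndicator]
  rw [wt, hsupp, Set.ncard_coe_finset]
  exact hcard _

end GroupLabelCode

section Quaternary

lemma nat_card_GF4 : Nat.card GF4 = 4 := by
  simpa using GaloisField.card 2 2 (by norm_num)

noncomputable def finFourEquivGF4 : Fin 4 ≃ GF4 := (Finite.equivFinOfCardEq nat_card_GF4).symm

variable (s : ℕ)

def block (i : Fin (4 * s + 3)) : Fin (s + 1) := ⟨i / 4, by omega⟩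

def posInBlock (i : Fin (4 * s + 3)) : Fin 4 := ⟨i % 4, by omega⟩

lemma eq_of_block_eq_of_posInBlock_eq {i i' : Fin (4 * s + 3)} (h : block s i = block s i')
    (h' : posInBlock s i = posInBlock s i') : i = i' := by
  simp only [block, posInBlock, Fin.mk.injEq] at h h'
  omega

lemma block_surjective : Function.Surjective (block s) :=
  fun j => ⟨⟨4 * j, by omega⟩, by simp [block]⟩

lemma card_block_le (j : Fin (s + 1)) : #{i | block s i = j} ≤ 4 := by
  simpa using card_le_card_of_injOn (posInBlock s) (fun _ _ => mem_univ _)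
    fun i hi i' hi' => eq_of_block_eq_of_posInBlock_eq s (by simp_all)

end Quaternary

theorem stmt_14_general (s : ℕ) :
    ∃ C : Submodule GF4 (Fin (4 * s + 3) → GF4),
      Module.finrank GF4 C = 3 * s + 1 ∧ isMinDist C 3 ∧ hasLocality C 3 := by
  set lbl : Fin (4 * s + 3) → GF4 := finFourEquivGF4 ∘ posInBlock s
  have hlbl_inj : ∀ i i', block s i = block s i' → lbl i = lbl i' → i = i' := fun _ _ h h' =>
    eq_of_block_eq_of_posInBlock_eq s h (finFourEquivGF4.injective h')
  have hlbl_ne {a b : ℕ} (ha : a < 4 * s + 3) (hb : b < 4 * s + 3) (hab : a < b) (hb4 : b < 4) :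
      lbl ⟨a, ha⟩ ≠ lbl ⟨b, hb⟩ :=
    finFourEquivGF4.injective.ne (by simp [posInBlock]; omega)
  obtain ⟨x, hx, hx0, hxwt⟩ := exists_wt_eq_three_mem_groupLabelCode (grp := block s)
    (i₁ := ⟨0, by omega⟩) (i₂ := ⟨1, by omega⟩) (i₃ := ⟨2, by omega⟩)
    (by simp [block]) (by simp [block])
    (hlbl_ne _ _ (by omega) (by omega)) (hlbl_ne _ _ (by omega) (by omega))
    (hlbl_ne _ _ (by omega) (by omega))
  have hdim := finrank_groupLabelCode_add (block_surjective s)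
    ⟨⟨0, by omega⟩, ⟨1, by omega⟩, by simp [block], hlbl_ne _ _ (by omega) (by omega)⟩
  refine ⟨groupLabelCode (block s) lbl, by omega,
    ⟨⟨x, hx, hx0, hxwt⟩, fun y hy hy0 => three_le_wt_of_mem_groupLabelCode hlbl_inj hy hy0⟩,
    hasLocality_groupLabelCode (card_block_le s)⟩

/-- for s ≥ 2 there exists an optimal quaternary
(4s+3, 3s+1, 3) LRC with minimum distance 3. -/
theorem stmt_14 (s : ℕ) (hs : 2 ≤ s) :
    ∃ C : Submodule GF4 (Fin (4 * s + 3) → GF4),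
      Module.finrank GF4 C = 3 * s + 1 ∧ isMinDist C 3 ∧ hasLocality C 3 :=
  stmt_14_general s
end
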